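/- arXiv:2109.06602 — 4 statements merged into one kernel-verified Lean document; each statement's English description precedes it below -/
import Mathlib

section
/- Fix p ∈ [1,∞), n ∈ ℕ, K ∈ (0,∞), a probability measure μ, and let x_1,…,x_n ∈ L_p(μ) be a K-incompressible family of vectors, i.e. ‖max_{i∈{1,…,n}} |x_i|‖_{L_p(μ)} ≤ K. Then for every ε ∈ (0,1) there exists d ∈ ℕ with d ≤ 32·e²·(2K)^{2p}·(log n)/ε² and points y_1,…,y_n ∈ ℓ_p^d such that for all i,j ∈ {1,…,n}: ‖x_i − x_j‖_{L_p(μ)}^p − ε ≤ ‖y_i − y_j‖_{ℓ_p^d}^p ≤ ‖x_i − x_j‖_{L_p(μ)}^p + ε. -/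
set_option maxHeartbeats 4000000

open MeasureTheory Real
open scoped ENNReal NNReal

private lemma integrable_of_bounded' {Ω : Type*} [MeasurableSpace Ω] {ν : Measure Ω}
    [IsFiniteMeasure ν] {f : Ω → ℝ} (hf : Measurable f)
    (C : ℝ) (hC : ∀ ω, |f ω| ≤ C) : Integrable f ν :=
  (integrable_const C).mono' hf.aestronglyMeasurable
    (Filter.Eventually.of_forall fun ω => by simpa [Real.norm_eq_abs] using hC ω)

private lemma mgf_aux {Ω : Type*} [MeasurableSpace Ω] (ν : Measure Ω) [IsProbabilityMeasure ν]
    {h : Ω → ℝ} (hm : Measurable h)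
    {b lam : ℝ} (hb : 0 ≤ b) (h0 : ∀ ω, 0 ≤ h ω) (h1 : ∀ ω, h ω ≤ b)
    (hlam : 0 ≤ lam) (hlb : lam * b ≤ 1) :
    ∫ ω, Real.exp (lam * h ω) ∂ν ≤ Real.exp (lam * (∫ ω, h ω ∂ν) + lam ^ 2 * b ^ 2) := by
  have hinth : Integrable h ν :=
    integrable_of_bounded' hm b fun ω => abs_le.2 ⟨by linarith [h0 ω], h1 ω⟩
  have hx1 : ∀ ω, lam * h ω ≤ 1 := fun ω =>
    le_trans (mul_le_mul_of_nonneg_left (h1 ω) hlam) hlb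
  have hpt : ∀ ω, Real.exp (lam * h ω) ≤ 1 + lam * h ω + lam ^ 2 * b ^ 2 := by
    intro ω
    have hx0 : 0 ≤ lam * h ω := mul_nonneg hlam (h0 ω)
    have hbd := Real.exp_bound' hx0 (hx1 ω) (n := 2) (by norm_num)
    have h2 : (lam * h ω) ^ 2 ≤ lam ^ 2 * b ^ 2 := by
      rw [mul_pow]
      exact mul_le_mul_of_nonneg_left (pow_le_pow_left₀ (h0 ω) (h1 ω) 2) (by positivity)
    have h2' : (0:ℝ) ≤ (lam * h ω) ^ 2 := sq_nonneg _
    simp only [Finset.sum_range_succ, Finset.sum_range_zero, Nat.factorial] at hbd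
    norm_num at hbd
    nlinarith
  have hintl : Integrable (fun ω => Real.exp (lam * h ω)) ν := by
    refine integrable_of_bounded' (by fun_prop) (Real.exp 1) fun ω => ?_
    rw [abs_of_nonneg (Real.exp_nonneg _)]
    exact Real.exp_le_exp.2 (hx1 ω)
  have hintr : Integrable (fun ω => 1 + lam * h ω + lam ^ 2 * b ^ 2) ν :=
    ((integrable_const 1).add (hinth.const_mul lam)).add (integrable_const _)
  calc ∫ ω, Real.exp (lam * h ω) ∂ν
      ≤ ∫ ω, (1 + lam * h ω + lam ^ 2 * b ^ 2) ∂ν := integral_mono hintl hintr hpt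
    _ = 1 + lam * (∫ ω, h ω ∂ν) + lam ^ 2 * b ^ 2 := by
        have hrg : ∀ ω : Ω, 1 + lam * h ω + lam ^ 2 * b ^ 2
            = lam * h ω + (1 + lam ^ 2 * b ^ 2) := fun ω => by ring
        simp_rw [hrg]
        rw [integral_add (hinth.const_mul lam) (integrable_const _), integral_const_mul,
          integral_const, probReal_univ]
        simp
        ring
    _ ≤ Real.exp (lam * (∫ ω, h ω ∂ν) + lam ^ 2 * b ^ 2) := by
        have := Real.add_one_le_exp (lam * (∫ ω, h ω ∂ν) + lam ^ 2 * b ^ 2)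
        linarith

private lemma chernoff_aux {Ω : Type*} [MeasureSpace Ω] [IsProbabilityMeasure (volume : Measure Ω)]
    {h : Ω → ℝ} (hm : Measurable h) {b ε : ℝ} (hb : 0 < b)
    (h0 : ∀ ω, 0 ≤ h ω) (h1 : ∀ ω, h ω ≤ b) (hε : 0 < ε) (hεb : ε ≤ b) (d : ℕ) :
    (volume : Measure (Fin d → Ω)) {w | (d : ℝ) * (∫ ω, h ω) + d * ε ≤ ∑ s, h (w s)}
      ≤ ENNReal.ofReal (Real.exp (-((d : ℝ) * ε ^ 2 / (4 * b ^ 2)))) := by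
  haveI : IsProbabilityMeasure (volume : Measure (Fin d → Ω)) :=
    inferInstanceAs (IsProbabilityMeasure (Measure.pi fun _ : Fin d => (volume : Measure Ω)))
  set lam : ℝ := ε / (2 * b ^ 2) with hlam_def
  have hlam : 0 < lam := by positivity
  have hlb : lam * b ≤ 1 := by
    rw [hlam_def]
    rw [div_mul_eq_mul_div, div_le_one (by positivity)]
    nlinarith
  set m : ℝ := ∫ ω, h ω with hm_def
  set Z : (Fin d → Ω) → ℝ := fun w => Real.exp (lam * ∑ s, h (w s)) with hZ_def
  have hZmeas : Measurable Z := by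
    apply Measurable.exp
    exact (Finset.measurable_sum Finset.univ fun s _ => hm.comp (measurable_pi_apply s)).const_mul lam
  have hZprod : ∀ w, Z w = ∏ s : Fin d, Real.exp (lam * h (w s)) := by
    intro w
    simp only [hZ_def]
    rw [Finset.mul_sum, Real.exp_sum]
  have hEZ : ∫ w, Z w = (∫ ω, Real.exp (lam * h ω)) ^ d := by
    simp_rw [hZprod]
    rw [MeasureTheory.integral_fintype_prod_volume_eq_pow (𝕜 := ℝ) (ι := Fin d) (fun ω => Real.exp (lam * h ω))]
    simp
  have hmgf := mgf_aux (volume : Measure Ω) hm hb.le h0 h1 hlam.le hlb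
  have hEZ_le : ∫ w, Z w ≤ Real.exp ((d : ℝ) * (lam * m + lam ^ 2 * b ^ 2)) := by
    rw [hEZ]
    calc (∫ ω, Real.exp (lam * h ω)) ^ d
        ≤ (Real.exp (lam * m + lam ^ 2 * b ^ 2)) ^ d :=
          pow_le_pow_left₀ (integral_nonneg fun ω => Real.exp_nonneg _) hmgf d
      _ = Real.exp ((d : ℝ) * (lam * m + lam ^ 2 * b ^ 2)) := (Real.exp_nat_mul _ d).symm
  -- Markov
  set a : ℝ := (d : ℝ) * m + d * ε with ha_def
  have hsub : {w : Fin d → Ω | a ≤ ∑ s, h (w s)}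
      ⊆ {w : Fin d → Ω | ENNReal.ofReal (Real.exp (lam * a)) ≤ ENNReal.ofReal (Z w)} := by
    intro w hw
    simp only [Set.mem_setOf_eq] at hw ⊢
    apply ENNReal.ofReal_le_ofReal
    exact Real.exp_le_exp.2 (mul_le_mul_of_nonneg_left hw hlam.le)
  have hZint : Integrable Z := by
    refine integrable_of_bounded' hZmeas (Real.exp (lam * (d * b))) fun w => ?_
    rw [abs_of_nonneg (Real.exp_nonneg _)]
    apply Real.exp_le_exp.2
    apply mul_le_mul_of_nonneg_left _ hlam.le
    calc ∑ s, h (w s) ≤ ∑ _s : Fin d, b := Finset.sum_le_sum fun s _ => h1 (w s)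
      _ = d * b := by simp [mul_comm]
  have hlint : ∫⁻ w, ENNReal.ofReal (Z w) = ENNReal.ofReal (∫ w, Z w) :=
    (ofReal_integral_eq_lintegral_ofReal hZint
      (Filter.Eventually.of_forall fun w => Real.exp_nonneg _)).symm
  have hmarkov := mul_meas_ge_le_lintegral₀ (μ := (volume : Measure (Fin d → Ω)))
    (hZmeas.ennreal_ofReal.aemeasurable) (ENNReal.ofReal (Real.exp (lam * a)))
  have key : ENNReal.ofReal (Real.exp (lam * a)) *
      (volume : Measure (Fin d → Ω)) {w | a ≤ ∑ s, h (w s)}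
      ≤ ENNReal.ofReal (Real.exp ((d : ℝ) * (lam * m + lam ^ 2 * b ^ 2))) :=
    le_trans (mul_le_mul_right (measure_mono hsub) _)
      (le_trans hmarkov (le_trans (le_of_eq hlint) (ENNReal.ofReal_le_ofReal hEZ_le)))
  have hA0 : ENNReal.ofReal (Real.exp (lam * a)) ≠ 0 := by
    simp [Real.exp_pos]
  have hAtop : ENNReal.ofReal (Real.exp (lam * a)) ≠ ⊤ := ENNReal.ofReal_ne_top
  have hfinal : (volume : Measure (Fin d → Ω)) {w | a ≤ ∑ s, h (w s)}
      ≤ ENNReal.ofReal (Real.exp ((d : ℝ) * (lam * m + lam ^ 2 * b ^ 2))) /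
        ENNReal.ofReal (Real.exp (lam * a)) := by
    rw [ENNReal.le_div_iff_mul_le (Or.inl hA0) (Or.inl hAtop), mul_comm]
    exact key
  refine le_trans hfinal (le_of_eq ?_)
  rw [← ENNReal.ofReal_div_of_pos (Real.exp_pos _), ← Real.exp_sub]
  congr 1
  have hbne : b ≠ 0 := ne_of_gt hb
  rw [ha_def, hlam_def]
  field_simp
  ring
/-- **Theorem 1 (ε-isometric dimension reduction for incompressible subsets of `L_p(μ)`).**
Fix `p ∈ [1,∞)`, `n ∈ ℕ`, `K ∈ (0,∞)`, a probability measure `μ`, and a `K`-incompressible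
family `x₁, …, xₙ ∈ L_p(μ)`, i.e. `‖max_i |x_i|‖_{L_p(μ)} ≤ K`.  Then for every `ε ∈ (0,1)`
there is `d ≤ 32 e² (2K)^{2p} (log n) / ε²` and `y₁, …, yₙ ∈ ℓ_p^d` with
`‖x_i - x_j‖_{L_p(μ)}^p - ε ≤ ‖y_i - y_j‖_{ℓ_p^d}^p ≤ ‖x_i - x_j‖_{L_p(μ)}^p + ε`. -/
theorem incompressible_dimension_reduction
    (p : ℝ) (hp : 1 ≤ p) (n : ℕ) (K : ℝ) (hK : 0 < K)
    {Ω : Type*} [MeasurableSpace Ω] (μ : Measure Ω) [IsProbabilityMeasure μ]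
    (x : Fin n → Ω → ℝ) (hx : ∀ i, MemLp (x i) (ENNReal.ofReal p) μ)
    (hinc : eLpNorm (fun ω => ⨆ i, |x i ω|) (ENNReal.ofReal p) μ ≤ ENNReal.ofReal K)
    (ε : ℝ) (hε : ε ∈ Set.Ioo (0 : ℝ) 1) :
    ∃ (d : ℕ) (y : Fin n → Fin d → ℝ),
      (d : ℝ) ≤ 32 * Real.exp 1 ^ 2 * (2 * K) ^ (2 * p) * Real.log n / ε ^ 2 ∧
      ∀ i j, (∫ ω, |x i ω - x j ω| ^ p ∂μ) - ε ≤ ∑ s, |y i s - y j s| ^ p ∧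
        ∑ s, |y i s - y j s| ^ p ≤ (∫ ω, |x i ω - x j ω| ^ p ∂μ) + ε := by
  obtain ⟨hε0, hε1⟩ := hε
  have hp0 : (0:ℝ) < p := lt_of_lt_of_le one_pos hp
  have hpne : p ≠ 0 := ne_of_gt hp0
  have hgex : ∀ i, ∃ gi : Ω → ℝ, Measurable gi ∧ x i =ᵐ[μ] gi := fun i =>
    ⟨(hx i).1.mk (x i), (hx i).1.stronglyMeasurable_mk.measurable, (hx i).1.ae_eq_mk⟩
  choose g hgm hgae using hgex
  have hgmem : ∀ i, MemLp (g i) (ENNReal.ofReal p) μ := fun i => (hx i).ae_eq (hgae i)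
  set D : Fin n → Fin n → ℝ := fun i j => ∫ ω, |g i ω - g j ω| ^ p ∂μ with hD_def
  have hDeq : ∀ i j, (∫ ω, |x i ω - x j ω| ^ p ∂μ) = D i j := by
    intro i j
    exact integral_congr_ae (by filter_upwards [hgae i, hgae j] with ω h1 h2; rw [h1, h2])
  have hD0 : ∀ i j, 0 ≤ D i j := fun i j =>
    integral_nonneg fun ω => Real.rpow_nonneg (abs_nonneg _) p
  have hlogn : 0 ≤ Real.log n := by
    rcases Nat.eq_zero_or_pos n with h | h
    · simp [h]
    · exact Real.log_nonneg (by exact_mod_cast h)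
  have hRHS0 : 0 ≤ 32 * Real.exp 1 ^ 2 * (2 * K) ^ (2 * p) * Real.log n / ε ^ 2 :=
    div_nonneg (mul_nonneg (mul_nonneg (by positivity) (Real.rpow_nonneg (by linarith) _)) hlogn)
      (sq_nonneg ε)
  suffices hgoal : ∃ (d : ℕ) (y : Fin n → Fin d → ℝ),
      (d : ℝ) ≤ 32 * Real.exp 1 ^ 2 * (2 * K) ^ (2 * p) * Real.log n / ε ^ 2 ∧
      ∀ i j, D i j - ε ≤ ∑ s, |y i s - y j s| ^ p ∧
        ∑ s, |y i s - y j s| ^ p ≤ D i j + ε by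
    obtain ⟨d, y, h1, h2⟩ := hgoal
    exact ⟨d, y, h1, fun i j => by rw [hDeq i j]; exact h2 i j⟩
  have htriv : (∀ i j : Fin n, D i j ≤ ε) →
      ∃ (d : ℕ) (y : Fin n → Fin d → ℝ),
      (d : ℝ) ≤ 32 * Real.exp 1 ^ 2 * (2 * K) ^ (2 * p) * Real.log n / ε ^ 2 ∧
      ∀ i j, D i j - ε ≤ ∑ s, |y i s - y j s| ^ p ∧
        ∑ s, |y i s - y j s| ^ p ≤ D i j + ε := by
    intro hsm
    refine ⟨0, fun _ _ => 0, by simpa using hRHS0, fun i j => ?_⟩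
    simp only [Finset.univ_eq_empty, Finset.sum_empty]
    exact ⟨by linarith [hsm i j], by linarith [hD0 i j]⟩
  rcases lt_or_ge n 2 with hn | hn2
  · apply htriv
    intro i j
    have hij : i = j := by
      have h1 := i.isLt
      have h2 := j.isLt
      exact Fin.ext (by omega)
    subst hij
    have hzero : D i i = 0 := by simp [hD_def, Real.zero_rpow hpne]
    linarith
  -- main case : n ≥ 2
  haveI hne : Nonempty (Fin n) := ⟨⟨0, by omega⟩⟩
  set M : Ω → ℝ := fun ω => ⨆ i, |g i ω| with hM_def
  have hMmeas : Measurable M := Measurable.iSup fun i => (hgm i).abs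
  have hle : ∀ i ω, |g i ω| ≤ M ω := fun i ω =>
    le_ciSup (f := fun i => |g i ω|) ((Set.finite_range _).bddAbove) i
  have hM0 : ∀ ω, 0 ≤ M ω := fun ω =>
    le_trans (abs_nonneg _) (hle (Classical.arbitrary _) ω)
  have hg0 : ∀ i ω, M ω = 0 → g i ω = 0 := fun i ω h =>
    abs_eq_zero.1 (le_antisymm (h ▸ hle i ω) (abs_nonneg _))
  have hMrep : ∀ ω, ∃ i, M ω = |g i ω| := fun ω => by
    obtain ⟨i, hi⟩ := exists_eq_ciSup_of_finite (f := fun i => |g i ω|)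
    exact ⟨i, hi.symm⟩
  have hMp_meas : Measurable fun ω => M ω ^ p := by fun_prop
  have hgp_int : ∀ i, Integrable (fun ω => |g i ω| ^ p) μ := by
    intro i
    have h1 := (hgmem i).integrable_norm_rpow (ENNReal.ofReal_pos.2 hp0).ne' ENNReal.ofReal_ne_top
    simpa [ENNReal.toReal_ofReal hp0.le, Real.norm_eq_abs] using h1
  have hMp_int : Integrable (fun ω => M ω ^ p) μ := by
    refine (integrable_finset_sum Finset.univ fun i _ => hgp_int i).mono'
      hMp_meas.aestronglyMeasurable (Filter.Eventually.of_forall fun ω => ?_)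
    rw [Real.norm_eq_abs, abs_of_nonneg (Real.rpow_nonneg (hM0 ω) p)]
    obtain ⟨i0, hi0⟩ := hMrep ω
    rw [hi0]
    exact Finset.single_le_sum (f := fun i => |g i ω| ^ p)
      (fun i _ => Real.rpow_nonneg (abs_nonneg _) p) (Finset.mem_univ i0)
  set c : ℝ := ∫ ω, M ω ^ p ∂μ with hc_def
  have hc0 : 0 ≤ c := integral_nonneg fun ω => Real.rpow_nonneg (hM0 ω) p
  -- `c ≤ K ^ p`
  have hsupae : (fun ω => ⨆ i, |x i ω|) =ᵐ[μ] M := by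
    have hall : ∀ᵐ ω ∂μ, ∀ i, x i ω = g i ω := (ae_all_iff).2 hgae
    filter_upwards [hall] with ω hω
    simp only [hM_def]
    congr 1
    ext i
    rw [hω i]
  have hinc' : eLpNorm M (ENNReal.ofReal p) μ ≤ ENNReal.ofReal K := by
    rwa [eLpNorm_congr_ae hsupae] at hinc
  have hcK : c ≤ K ^ p := by
    rw [eLpNorm_eq_lintegral_rpow_enorm_toReal (ENNReal.ofReal_pos.2 hp0).ne'
      ENNReal.ofReal_ne_top, ENNReal.toReal_ofReal hp0.le] at hinc'
    have h2 := ENNReal.rpow_le_rpow hinc' hp0.le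
    rw [← ENNReal.rpow_mul, one_div, inv_mul_cancel₀ hpne, ENNReal.rpow_one] at h2
    have h3 : ∫⁻ ω, ‖M ω‖ₑ ^ p ∂μ = ∫⁻ ω, ENNReal.ofReal (M ω ^ p) ∂μ := by
      apply lintegral_congr fun ω => ?_
      rw [Real.enorm_eq_ofReal (hM0 ω), ← ENNReal.ofReal_rpow_of_nonneg (hM0 ω) hp0.le]
    rw [h3] at h2
    have h4 : ENNReal.ofReal c = ∫⁻ ω, ENNReal.ofReal (M ω ^ p) ∂μ :=
      ofReal_integral_eq_lintegral_ofReal hMp_int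
        (Filter.Eventually.of_forall fun ω => Real.rpow_nonneg (hM0 ω) p)
    rw [← h4, ENNReal.ofReal_rpow_of_nonneg hK.le hp0.le] at h2
    exact (ENNReal.ofReal_le_ofReal_iff (by positivity)).1 h2
  have habs2M : ∀ i j ω, |g i ω - g j ω| ^ p ≤ 2 ^ p * M ω ^ p := by
    intro i j ω
    have h1 : |g i ω - g j ω| ≤ 2 * M ω := by
      calc |g i ω - g j ω| = |g i ω + -(g j ω)| := by rw [sub_eq_add_neg]
        _ ≤ |g i ω| + |-(g j ω)| := abs_add_le _ _
        _ = |g i ω| + |g j ω| := by rw [abs_neg]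
        _ ≤ M ω + M ω := add_le_add (hle i ω) (hle j ω)
        _ = 2 * M ω := by ring
    calc |g i ω - g j ω| ^ p ≤ (2 * M ω) ^ p := Real.rpow_le_rpow (abs_nonneg _) h1 hp0.le
      _ = 2 ^ p * M ω ^ p := Real.mul_rpow (by norm_num) (hM0 ω)
  have hDint : ∀ i j, Integrable (fun ω => |g i ω - g j ω| ^ p) μ := by
    intro i j
    have h1 := ((hgmem i).sub (hgmem j)).integrable_norm_rpow
      (ENNReal.ofReal_pos.2 hp0).ne' ENNReal.ofReal_ne_top
    simpa [ENNReal.toReal_ofReal hp0.le, Real.norm_eq_abs] using h1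
  have hDleb : ∀ i j, D i j ≤ 2 ^ p * c := by
    intro i j
    calc D i j ≤ ∫ ω, 2 ^ p * M ω ^ p ∂μ :=
          integral_mono (hDint i j) (hMp_int.const_mul _) (habs2M i j)
      _ = 2 ^ p * c := integral_const_mul _ _
  rcases le_or_gt (2 ^ p * c) ε with hsmall | hbig
  · exact htriv fun i j => le_trans (hDleb i j) hsmall
  set b : ℝ := 2 ^ p * c with hb_def
  have hbpos : 0 < b := lt_trans hε0 hbig
  have h2p : (0:ℝ) < 2 ^ p := Real.rpow_pos_of_pos two_pos p
  have hcpos : 0 < c := by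
    rcases hc0.lt_or_eq with h | h
    · exact h
    · exfalso
      rw [hb_def, ← h, mul_zero] at hbpos
      exact lt_irrefl _ hbpos
  have hcne : c ≠ 0 := ne_of_gt hcpos
  have hεb : ε ≤ b := hbig.le
  have hbB : b ≤ (2 * K) ^ p := by
    rw [hb_def, Real.mul_rpow (by norm_num) hK.le]
    exact mul_le_mul_of_nonneg_left hcK (Real.rpow_nonneg (by norm_num) p)
  -- the tilted probability measure
  set ρ : Ω → ℝ≥0 := fun ω => Real.toNNReal (M ω ^ p / c) with hρ_def
  have hρmeas : Measurable ρ := by fun_prop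
  set ν : Measure Ω := μ.withDensity (fun ω => (ρ ω : ℝ≥0∞)) with hν_def
  have hρc : ∀ ω, ((ρ ω : ℝ≥0) : ℝ) = M ω ^ p / c := fun ω =>
    Real.coe_toNNReal _ (div_nonneg (Real.rpow_nonneg (hM0 ω) p) hc0)
  haveI hνprob : IsProbabilityMeasure ν := by
    constructor
    rw [hν_def, withDensity_apply _ MeasurableSet.univ, setLIntegral_univ]
    have hcoe : ∀ ω, ((ρ ω : ℝ≥0) : ℝ≥0∞) = ENNReal.ofReal (M ω ^ p / c) := fun ω => rfl
    simp_rw [hcoe]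
    rw [← ofReal_integral_eq_lintegral_ofReal (hMp_int.div_const c)
      (Filter.Eventually.of_forall fun ω => div_nonneg (Real.rpow_nonneg (hM0 ω) p) hc0)]
    rw [integral_div, div_self hcne, ENNReal.ofReal_one]
  set F : Fin n → Fin n → Ω → ℝ := fun i j ω =>
    if M ω = 0 then 0 else c * |g i ω - g j ω| ^ p / M ω ^ p with hF_def
  have hFmeas : ∀ i j, Measurable (F i j) := by
    intro i j
    exact Measurable.ite (hMmeas (measurableSet_singleton 0)) measurable_const (by fun_prop)
  have hF0 : ∀ i j ω, 0 ≤ F i j ω := by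
    intro i j ω
    simp only [hF_def]
    split
    · exact le_refl 0
    · exact div_nonneg (mul_nonneg hc0 (Real.rpow_nonneg (abs_nonneg _) p))
        (Real.rpow_nonneg (hM0 ω) p)
  have hF1 : ∀ i j ω, F i j ω ≤ b := by
    intro i j ω
    simp only [hF_def]
    split
    · exact hbpos.le
    · rename_i h
      have hMpos : 0 < M ω := lt_of_le_of_ne (hM0 ω) (Ne.symm h)
      have hMp : 0 < M ω ^ p := Real.rpow_pos_of_pos hMpos p
      rw [div_le_iff₀ hMp, hb_def]
      calc c * |g i ω - g j ω| ^ p ≤ c * (2 ^ p * M ω ^ p) :=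
            mul_le_mul_of_nonneg_left (habs2M i j ω) hc0
        _ = 2 ^ p * c * M ω ^ p := by ring
  have hFint : ∀ i j, Integrable (F i j) ν := fun i j =>
    integrable_of_bounded' (hFmeas i j) b fun ω =>
      abs_le.2 ⟨by linarith [hF0 i j ω], hF1 i j ω⟩
  have hFmean : ∀ i j, ∫ ω, F i j ω ∂ν = D i j := by
    intro i j
    rw [hν_def, integral_withDensity_eq_integral_smul hρmeas]
    simp only [hD_def]
    apply integral_congr_ae
    apply Filter.Eventually.of_forall
    intro ω
    simp only [NNReal.smul_def]
    rw [hρc ω]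
    by_cases h : M ω = 0
    · simp only [hF_def, if_pos h]
      rw [hg0 i ω h, hg0 j ω h]
      simp [Real.zero_rpow hpne]
    · simp only [hF_def, if_neg h]
      have hMpos : 0 < M ω := lt_of_le_of_ne (hM0 ω) (Ne.symm h)
      have hMp : (0:ℝ) < M ω ^ p := Real.rpow_pos_of_pos hMpos p
      field_simp
      rw [smul_eq_mul]
      field_simp
  -- choice of the dimension
  set L : ℝ := Real.log n with hL_def
  have hn2' : (2:ℝ) ≤ (n:ℝ) := by exact_mod_cast hn2
  have hL2 : Real.log 2 ≤ L := Real.log_le_log (by norm_num) hn2'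
  have hlog2 : (0.6931471803 : ℝ) < Real.log 2 := Real.log_two_gt_d9
  have hexp1 : (2.7182818283 : ℝ) < Real.exp 1 := Real.exp_one_gt_d9
  have hLlb : (0.6931471803 : ℝ) ≤ L := le_trans hlog2.le hL2
  set d : ℕ := ⌈4 * b ^ 2 / ε ^ 2 * (2 * L + 2)⌉₊ with hd_def
  have harg0 : 0 ≤ 4 * b ^ 2 / ε ^ 2 * (2 * L + 2) :=
    mul_nonneg (by positivity) (by linarith)
  have hd_lb : 4 * b ^ 2 / ε ^ 2 * (2 * L + 2) ≤ (d:ℝ) := Nat.le_ceil _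
  have hd_ub : (d:ℝ) ≤ 4 * b ^ 2 / ε ^ 2 * (2 * L + 2) + 1 := by
    have := Nat.ceil_lt_add_one harg0
    linarith
  have hd_pos : 0 < d := by
    rw [hd_def]
    apply Nat.ceil_pos.2
    have h1 : (0:ℝ) < 4 * b ^ 2 / ε ^ 2 := by positivity
    exact mul_pos h1 (by linarith)
  have hεne : ε ≠ 0 := ne_of_gt hε0
  have hdim : (d:ℝ) ≤ 32 * Real.exp 1 ^ 2 * (2 * K) ^ (2 * p) * L / ε ^ 2 := by
    have hB2 : (2 * K) ^ (2 * p) = ((2 * K) ^ p) ^ 2 := by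
      rw [mul_comm 2 p, Real.rpow_mul (by linarith),
        show ((2:ℝ)) = ((2:ℕ):ℝ) by norm_num, Real.rpow_natCast]
    set B : ℝ := (2 * K) ^ p with hB_def
    have hBpos : 0 < B := Real.rpow_pos_of_pos (by linarith) p
    have hεB : ε < B := lt_of_lt_of_le hbig (hb_def ▸ hbB)
    have hb2B : b ^ 2 ≤ B ^ 2 := pow_le_pow_left₀ hbpos.le hbB 2
    have hε2B : ε ^ 2 ≤ B ^ 2 := pow_le_pow_left₀ hε0.le hεB.le 2
    have hE : (7.3:ℝ) ≤ Real.exp 1 ^ 2 :=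
      le_trans (by norm_num) (pow_le_pow_left₀ (by norm_num) hexp1.le 2)
    rw [hB2, le_div_iff₀ (by positivity : (0:ℝ) < ε ^ 2)]
    have h1 : (d:ℝ) * ε ^ 2 ≤ (4 * b ^ 2 / ε ^ 2 * (2 * L + 2) + 1) * ε ^ 2 :=
      mul_le_mul_of_nonneg_right hd_ub (sq_nonneg ε)
    have h2 : (4 * b ^ 2 / ε ^ 2 * (2 * L + 2) + 1) * ε ^ 2
        = 4 * b ^ 2 * (2 * L + 2) + ε ^ 2 := by
      field_simp
    have h3 : 4 * b ^ 2 * (2 * L + 2) + ε ^ 2 ≤ 4 * B ^ 2 * (2 * L + 2) + B ^ 2 := by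
      have hfac : (0:ℝ) ≤ 4 * (2 * L + 2) := by linarith
      have := mul_le_mul_of_nonneg_right hb2B hfac
      linarith
    have hBL : B ^ 2 * (0.6931471803:ℝ) ≤ B ^ 2 * L :=
      mul_le_mul_of_nonneg_left hLlb (sq_nonneg B)
    have hB2L0 : (0:ℝ) ≤ B ^ 2 * L := mul_nonneg (sq_nonneg B) (by linarith)
    have h4 : 4 * B ^ 2 * (2 * L + 2) + B ^ 2 ≤ 32 * Real.exp 1 ^ 2 * B ^ 2 * L := by
      have hint2 : 7.3 * (B ^ 2 * L) ≤ Real.exp 1 ^ 2 * (B ^ 2 * L) :=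
        mul_le_mul_of_nonneg_right hE hB2L0
      nlinarith [hint2, hBL, hB2L0, sq_nonneg B]
    calc (d:ℝ) * ε ^ 2 ≤ 4 * B ^ 2 * (2 * L + 2) + B ^ 2 := by linarith
      _ ≤ 32 * Real.exp 1 ^ 2 * B ^ 2 * L := h4
      _ = 32 * Real.exp 1 ^ 2 * B ^ 2 * L := rfl
  -- Chernoff bounds on the product space
  letI : MeasureSpace Ω := { toMeasurableSpace := ‹MeasurableSpace Ω›, volume := ν }
  haveI : IsProbabilityMeasure (volume : Measure Ω) := hνprob
  haveI hPprob : IsProbabilityMeasure (volume : Measure (Fin d → Ω)) :=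
    inferInstanceAs (IsProbabilityMeasure (Measure.pi fun _ : Fin d => (volume : Measure Ω)))
  have hvol : (volume : Measure Ω) = ν := rfl
  set r : ℝ := Real.exp (-((d:ℝ) * ε ^ 2 / (4 * b ^ 2))) with hr_def
  have hUp : ∀ i j, (volume : Measure (Fin d → Ω))
      {w : Fin d → Ω | (d:ℝ) * D i j + (d:ℝ) * ε ≤ ∑ s, F i j (w s)} ≤ ENNReal.ofReal r := by
    intro i j
    have hch := chernoff_aux (Ω := Ω) (hFmeas i j) hbpos (hF0 i j) (hF1 i j) hε0 hεb d
    rw [hvol, hFmean i j] at hch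
    exact hch
  have hDown : ∀ i j, (volume : Measure (Fin d → Ω))
      {w : Fin d → Ω | ∑ s, F i j (w s) ≤ (d:ℝ) * D i j - (d:ℝ) * ε} ≤ ENNReal.ofReal r := by
    intro i j
    have hmeas2 : Measurable (fun ω => b - F i j ω) := measurable_const.sub (hFmeas i j)
    have h0' : ∀ ω, 0 ≤ b - F i j ω := fun ω => by linarith [hF1 i j ω]
    have h1' : ∀ ω, b - F i j ω ≤ b := fun ω => by linarith [hF0 i j ω]
    have hch := chernoff_aux (Ω := Ω) hmeas2 hbpos h0' h1' hε0 hεb d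
    have hmean2 : ∫ ω, (b - F i j ω) = b - D i j := by
      rw [hvol, integral_sub (integrable_const b) (hFint i j), integral_const, probReal_univ,
        hFmean i j]
      simp
    rw [hmean2] at hch
    refine le_trans (measure_mono ?_) hch
    intro w hw
    simp only [Set.mem_setOf_eq] at hw ⊢
    have hsum : ∑ s, (b - F i j (w s)) = (d:ℝ) * b - ∑ s, F i j (w s) := by
      rw [Finset.sum_sub_distrib, Finset.sum_const, Finset.card_univ, Fintype.card_fin,
        nsmul_eq_mul]
    rw [hsum]
    linarith
  set bad : Set (Fin d → Ω) := ⋃ ij : Fin n × Fin n,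
    ({w | (d:ℝ) * D ij.1 ij.2 + (d:ℝ) * ε ≤ ∑ s, F ij.1 ij.2 (w s)} ∪
     {w | ∑ s, F ij.1 ij.2 (w s) ≤ (d:ℝ) * D ij.1 ij.2 - (d:ℝ) * ε}) with hbad_def
  have hbadlt : (volume : Measure (Fin d → Ω)) bad < 1 := by
    have h1 : (volume : Measure (Fin d → Ω)) bad
        ≤ ∑' _ij : Fin n × Fin n, (ENNReal.ofReal r + ENNReal.ofReal r) := by
      refine le_trans (measure_iUnion_le _) (ENNReal.tsum_le_tsum fun ij => ?_)
      exact le_trans (measure_union_le _ _) (add_le_add (hUp ij.1 ij.2) (hDown ij.1 ij.2))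
    rw [tsum_fintype] at h1
    simp only [Finset.sum_const, Finset.card_univ, Fintype.card_prod, Fintype.card_fin,
      nsmul_eq_mul] at h1
    have hr0 : 0 ≤ r := Real.exp_nonneg _
    have h2 : ((n * n : ℕ) : ℝ≥0∞) * (ENNReal.ofReal r + ENNReal.ofReal r)
        = ENNReal.ofReal (((n * n : ℕ) : ℝ) * (r + r)) := by
      rw [← ENNReal.ofReal_add hr0 hr0, ← ENNReal.ofReal_natCast,
        ← ENNReal.ofReal_mul (by positivity)]
    rw [h2] at h1
    refine lt_of_le_of_lt h1 (ENNReal.ofReal_lt_one.2 ?_)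
    have hnpos : (0:ℝ) < (n:ℝ) := by linarith
    have hxlb : 2 * L + 2 ≤ (d:ℝ) * ε ^ 2 / (4 * b ^ 2) := by
      rw [le_div_iff₀ (by positivity : (0:ℝ) < 4 * b ^ 2)]
      calc (2 * L + 2) * (4 * b ^ 2) = (4 * b ^ 2 / ε ^ 2 * (2 * L + 2)) * ε ^ 2 := by
            field_simp
        _ ≤ (d:ℝ) * ε ^ 2 := mul_le_mul_of_nonneg_right hd_lb (sq_nonneg ε)
    have hrle : r ≤ Real.exp (-(2 * L + 2)) := by
      rw [hr_def]
      exact Real.exp_le_exp.2 (by linarith)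
    have hexp_eq : Real.exp (2 * L + 2) = (n:ℝ) ^ 2 * Real.exp 1 ^ 2 := by
      rw [Real.exp_add]
      congr 1
      · rw [show (2:ℝ) * L = ((2:ℕ):ℝ) * L by norm_num, Real.exp_nat_mul, hL_def,
          Real.exp_log hnpos]
      · rw [show (2:ℝ) = ((2:ℕ):ℝ) * 1 by norm_num, Real.exp_nat_mul]
    have hrle2 : r ≤ ((n:ℝ) ^ 2 * Real.exp 1 ^ 2)⁻¹ := by
      rw [← hexp_eq, ← Real.exp_neg]
      exact hrle
    have hE : (7.3:ℝ) ≤ Real.exp 1 ^ 2 :=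
      le_trans (by norm_num) (pow_le_pow_left₀ (by norm_num) hexp1.le 2)
    have hn2p : (0:ℝ) < (n:ℝ) ^ 2 := by positivity
    calc ((n * n : ℕ) : ℝ) * (r + r) = 2 * (n:ℝ) ^ 2 * r := by push_cast; ring
      _ ≤ 2 * (n:ℝ) ^ 2 * ((n:ℝ) ^ 2 * Real.exp 1 ^ 2)⁻¹ :=
          mul_le_mul_of_nonneg_left hrle2 (by positivity)
      _ = 2 / Real.exp 1 ^ 2 := by field_simp
      _ < 1 := by rw [div_lt_one (by positivity)]; linarith
  have hne_univ : bad ≠ Set.univ := by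
    intro hcon
    rw [hcon, measure_univ] at hbadlt
    exact lt_irrefl _ hbadlt
  obtain ⟨w, hw⟩ := (Set.ne_univ_iff_exists_notMem _).1 hne_univ
  have hgood : ∀ i j, (d:ℝ) * D i j - (d:ℝ) * ε < ∑ s, F i j (w s) ∧
      ∑ s, F i j (w s) < (d:ℝ) * D i j + (d:ℝ) * ε := by
    intro i j
    have h1 : w ∉ ({w | (d:ℝ) * D i j + (d:ℝ) * ε ≤ ∑ s, F i j (w s)} ∪
        {w | ∑ s, F i j (w s) ≤ (d:ℝ) * D i j - (d:ℝ) * ε}) := by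
      intro hcon
      exact hw (Set.mem_iUnion.2 ⟨(i, j), hcon⟩)
    rw [Set.mem_union, Set.mem_setOf_eq, Set.mem_setOf_eq] at h1
    push_neg at h1
    exact ⟨h1.2, h1.1⟩
  -- the embedding
  set τ : Ω → ℝ := fun ω => if M ω = 0 then 0 else (c / (M ω ^ p * d)) ^ (1 / p) with hτ_def
  refine ⟨d, fun i s => g i (w s) * τ (w s), hdim, ?_⟩
  intro i j
  have hdR : (0:ℝ) < (d:ℝ) := by exact_mod_cast hd_pos
  have hsum : ∑ s, |g i (w s) * τ (w s) - g j (w s) * τ (w s)| ^ p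
      = (∑ s, F i j (w s)) / (d:ℝ) := by
    rw [Finset.sum_div]
    apply Finset.sum_congr rfl
    intro s _
    by_cases h : M (w s) = 0
    · simp only [hτ_def, if_pos h]
      rw [hg0 i _ h, hg0 j _ h]
      simp only [hF_def, if_pos h]
      simp [Real.zero_rpow hpne]
    · simp only [hτ_def, if_neg h]
      have hMpos : 0 < M (w s) := lt_of_le_of_ne (hM0 _) (Ne.symm h)
      have hMp : (0:ℝ) < M (w s) ^ p := Real.rpow_pos_of_pos hMpos p
      have hτ0 : (0:ℝ) ≤ c / (M (w s) ^ p * (d:ℝ)) := by positivity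
      have hfact : g i (w s) * (c / (M (w s) ^ p * (d:ℝ))) ^ (1 / p)
          - g j (w s) * (c / (M (w s) ^ p * (d:ℝ))) ^ (1 / p)
          = (g i (w s) - g j (w s)) * (c / (M (w s) ^ p * (d:ℝ))) ^ (1 / p) := by ring
      rw [hfact, abs_mul, Real.mul_rpow (abs_nonneg _) (abs_nonneg _),
        abs_of_nonneg (Real.rpow_nonneg hτ0 _), ← Real.rpow_mul hτ0,
        one_div, inv_mul_cancel₀ hpne, Real.rpow_one]
      simp only [hF_def, if_neg h]
      field_simp
  rw [hsum]
  obtain ⟨hlo, hhi⟩ := hgood i j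
  constructor
  · rw [le_div_iff₀ hdR]
    have hring : (D i j - ε) * (d:ℝ) = (d:ℝ) * D i j - (d:ℝ) * ε := by ring
    linarith [hring.le, hring.ge]
  · rw [div_le_iff₀ hdR]
    have hring : (D i j + ε) * (d:ℝ) = (d:ℝ) * D i j + (d:ℝ) * ε := by ring
    linarith [hring.le, hring.ge]
end

section
/- Fix p ∈ [1,∞), n ∈ ℕ, K ∈ (0,∞), a probability measure μ, and let x_1,…,x_n ∈ L_p(μ) satisfy ‖max_{i∈{1,…,n}} |x_i|‖_{L_p(μ)} ≤ K. Then for every ε ∈ (0,1) there exists d ∈ ℕ with d ≤ 32·e²·(2K)^{2p}·(log n)/ε² and a linear operator L from the linear span of {x_1,…,x_n} in L_p(μ) into ℓ_p^d such that the images y_i = L(x_i) satisfy for all i,j ∈ {1,…,n}: ‖x_i − x_j‖_{L_p(μ)}^p − ε ≤ ‖y_i − y_j‖_{ℓ_p^d}^p ≤ ‖x_i − x_j‖_{L_p(μ)}^p + ε. -/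
open MeasureTheory Real
open scoped NNReal ENNReal

set_option maxHeartbeats 1000000


lemma exp_le_add_exp_sq (x : ℝ) : Real.exp x ≤ x + Real.exp (x ^ 2) := by
  rcases le_or_gt x 0 with hx | hx
  · have h1 : (-x) + 1 ≤ Real.exp (-x) := Real.add_one_le_exp (-x)
    have h2 : Real.exp x ≤ 1 / (1 - x) := by
      rw [le_div_iff₀ (by linarith)]
      calc Real.exp x * (1 - x) ≤ Real.exp x * Real.exp (-x) := by
            have := Real.exp_pos x
            nlinarith [Real.add_one_le_exp (-x)]
        _ = 1 := by rw [← Real.exp_add]; simp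
    have h3 : (1 : ℝ) + x ^ 2 ≤ Real.exp (x ^ 2) := by
      have := Real.add_one_le_exp (x ^ 2); linarith
    have h4 : 1 / (1 - x) ≤ x + (1 + x ^ 2) := by
      rw [div_le_iff₀ (by linarith)]
      nlinarith
    linarith
  · rcases le_or_gt x 1 with hx1 | hx1
    · have h1 : Real.exp x ≤ 1 + x + x ^ 2 := by
        have hb := Real.exp_bound (x := x) (by rw [abs_of_pos hx]; exact hx1) (n := 2) (by norm_num)
        have h2 : ∑ i ∈ Finset.range 2, x ^ i / (Nat.factorial i : ℝ) = 1 + x := by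
          simp [Finset.sum_range_succ]
        rw [h2] at hb
        have h3 : |x| ^ 2 * ((2 : ℕ).succ / ((Nat.factorial 2 : ℝ) * 2)) ≤ x ^ 2 := by
          rw [abs_of_pos hx]
          norm_num [Nat.factorial]
          nlinarith
        have := abs_le.1 hb
        linarith [this.2]
      have h3 : (1 : ℝ) + x ^ 2 ≤ Real.exp (x ^ 2) := by
        have := Real.add_one_le_exp (x ^ 2); linarith
      linarith
    · have : Real.exp x ≤ Real.exp (x ^ 2) := by
        apply Real.exp_le_exp.2; nlinarith
      linarith


lemma mgf_one_le {Ω' : Type*} [MeasurableSpace Ω'] (ν : Measure Ω') [IsProbabilityMeasure ν]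
    {Z : Ω' → ℝ} (hZ : Measurable Z) {B l : ℝ} (hbound : ∀ ω, |Z ω| ≤ B)
    (hmean : ∫ ω, Z ω ∂ν = 0) :
    ∫ ω, Real.exp (l * Z ω) ∂ν ≤ Real.exp (l ^ 2 * B ^ 2) := by
  have hZint : Integrable Z ν := by
    refine Integrable.mono' (integrable_const B) hZ.aestronglyMeasurable ?_
    filter_upwards with ω using by simpa using hbound ω
  have hptwise : ∀ ω, Real.exp (l * Z ω) ≤ l * Z ω + Real.exp (l ^ 2 * B ^ 2) := by
    intro ω
    refine (exp_le_add_exp_sq (l * Z ω)).trans (add_le_add_right ?_ _)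
    rw [Real.exp_le_exp]
    have h1 : (Z ω) ^ 2 ≤ B ^ 2 := sq_le_sq' (abs_le.1 (hbound ω)).1 (abs_le.1 (hbound ω)).2
    calc (l * Z ω) ^ 2 = l ^ 2 * (Z ω) ^ 2 := by ring
      _ ≤ l ^ 2 * B ^ 2 := by nlinarith [sq_nonneg l]
  have hint1 : Integrable (fun ω => Real.exp (l * Z ω)) ν := by
    refine Integrable.mono' (integrable_const (Real.exp (|l| * B))) ?_ ?_
    · exact (hZ.const_mul l).exp.aestronglyMeasurable
    · filter_upwards with ω
      rw [Real.norm_eq_abs, abs_of_pos (Real.exp_pos _), Real.exp_le_exp]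
      calc l * Z ω ≤ |l * Z ω| := le_abs_self _
        _ = |l| * |Z ω| := abs_mul _ _
        _ ≤ |l| * B := by
            have := hbound ω
            have := abs_nonneg (Z ω)
            nlinarith [abs_nonneg l]
  have hint2 : Integrable (fun ω => l * Z ω + Real.exp (l ^ 2 * B ^ 2)) ν :=
    (hZint.const_mul l).add (integrable_const _)
  calc ∫ ω, Real.exp (l * Z ω) ∂ν ≤ ∫ ω, (l * Z ω + Real.exp (l ^ 2 * B ^ 2)) ∂ν :=
        integral_mono hint1 hint2 hptwise
    _ = l * ∫ ω, Z ω ∂ν + Real.exp (l ^ 2 * B ^ 2) := by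
        rw [integral_add (hZint.const_mul l) (integrable_const _), integral_const_mul,
          integral_const, probReal_univ]
        simp
    _ = Real.exp (l ^ 2 * B ^ 2) := by rw [hmean]; ring

lemma chernoff_pi {Ω' : Type*} [MeasurableSpace Ω'] (ν : Measure Ω') [IsProbabilityMeasure ν]
    {Z : Ω' → ℝ} (hZ : Measurable Z) {B : ℝ} (hB : 0 < B) (hbound : ∀ ω, |Z ω| ≤ B)
    (hmean : ∫ ω, Z ω ∂ν = 0) (d : ℕ) {t : ℝ} (ht : 0 < t) :
    ((Measure.pi fun _ : Fin d => ν) {y | (d : ℝ) * t ≤ ∑ s, Z (y s)}).toReal ≤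
      Real.exp (-((d : ℝ) * t ^ 2 / (4 * B ^ 2))) := by
  set l := t / (2 * B ^ 2) with hl
  have hl0 : 0 ≤ l := by positivity
  set P := Measure.pi fun _ : Fin d => ν with hP
  have hXmeas : Measurable (fun y : Fin d → Ω' => ∑ s, Z (y s)) :=
    Finset.measurable_sum _ fun s _ => hZ.comp (measurable_pi_apply s)
  have hint : Integrable (fun y => Real.exp (l * ∑ s, Z (y s))) P := by
    refine Integrable.mono' (integrable_const (Real.exp (l * ((d : ℝ) * B)))) ?_ ?_
    · exact (hXmeas.const_mul l).exp.aestronglyMeasurable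
    · filter_upwards with y
      rw [Real.norm_eq_abs, abs_of_pos (Real.exp_pos _), Real.exp_le_exp]
      have hsum : ∑ s, Z (y s) ≤ (d : ℝ) * B := by
        calc ∑ s, Z (y s) ≤ ∑ _s : Fin d, B :=
              Finset.sum_le_sum fun s _ => le_trans (le_abs_self _) (hbound _)
          _ = (d : ℝ) * B := by simp [mul_comm]
      nlinarith
  have hmarkov := ProbabilityTheory.measure_ge_le_exp_mul_mgf (μ := P)
    (X := fun y => ∑ s, Z (y s)) ((d : ℝ) * t) hl0 hint
  have hprod : ∫ y : Fin d → Ω', ∏ s, Real.exp (l * Z (y s)) ∂P =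
      (∫ ω, Real.exp (l * Z ω) ∂ν) ^ d := by
    letI : MeasureSpace Ω' := { volume := ν }
    haveI : SigmaFinite (volume : Measure Ω') := inferInstanceAs (SigmaFinite ν)
    have h := MeasureTheory.integral_fintype_prod_eq_pow (𝕜 := ℝ) (ι := Fin d)
      (fun ω => Real.exp (l * Z ω)) (μ := ν)
    simpa [hP, MeasureTheory.volume_pi] using h
  have hmgf : ProbabilityTheory.mgf (fun y => ∑ s, Z (y s)) P l =
      (∫ ω, Real.exp (l * Z ω) ∂ν) ^ d := by
    rw [ProbabilityTheory.mgf, ← hprod]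
    refine integral_congr_ae (Filter.Eventually.of_forall fun y => ?_)
    simp only [Finset.mul_sum, Real.exp_sum]
  rw [hmgf] at hmarkov
  refine hmarkov.trans ?_
  have hone : (∫ ω, Real.exp (l * Z ω) ∂ν) ^ d ≤ Real.exp (l ^ 2 * B ^ 2) ^ d := by
    refine pow_le_pow_left₀ ?_ (mgf_one_le ν hZ hbound hmean) d
    exact integral_nonneg fun ω => (Real.exp_pos _).le
  calc Real.exp (-l * ((d : ℝ) * t)) * (∫ ω, Real.exp (l * Z ω) ∂ν) ^ d
      ≤ Real.exp (-l * ((d : ℝ) * t)) * Real.exp (l ^ 2 * B ^ 2) ^ d := by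
        exact mul_le_mul_of_nonneg_left hone (Real.exp_pos _).le
    _ = Real.exp (-l * ((d : ℝ) * t) + (d : ℝ) * (l ^ 2 * B ^ 2)) := by
        rw [← Real.exp_nat_mul, ← Real.exp_add]
    _ = Real.exp (-((d : ℝ) * t ^ 2 / (4 * B ^ 2))) := by
        congr 1
        rw [hl]
        field_simp
        ring

/-- **Remark 2.6 (the dimension reduction of Theorem 1 is realized by a linear operator).**
Under the hypotheses of Theorem 1 (a `K`-incompressible family `x₁, …, xₙ ∈ L_p(μ)`),
for every `ε ∈ (0,1)` there is `d ≤ 32 e² (2K)^{2p} (log n)/ε²` and a linear operator `L`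
from the span of `{x₁, …, xₙ}` into `ℓ_p^d` such that the images `y_i = L x_i` satisfy
`‖x_i - x_j‖_{L_p(μ)}^p - ε ≤ ‖y_i - y_j‖_{ℓ_p^d}^p ≤ ‖x_i - x_j‖_{L_p(μ)}^p + ε`. -/
theorem incompressible_dimension_reduction_linear
    (p : ℝ) (hp : 1 ≤ p) (n : ℕ) (K : ℝ) (hK : 0 < K)
    {Ω : Type*} [MeasurableSpace Ω] (μ : Measure Ω) [IsProbabilityMeasure μ]
    (x : Fin n → Ω → ℝ) (hx : ∀ i, MemLp (x i) (ENNReal.ofReal p) μ)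
    (hinc : eLpNorm (fun ω => ⨆ i, |x i ω|) (ENNReal.ofReal p) μ ≤ ENNReal.ofReal K)
    (ε : ℝ) (hε : ε ∈ Set.Ioo (0 : ℝ) 1) :
    ∃ (d : ℕ) (L : ↥(Submodule.span ℝ (Set.range x)) →ₗ[ℝ] (Fin d → ℝ)),
      (d : ℝ) ≤ 32 * Real.exp 1 ^ 2 * (2 * K) ^ (2 * p) * Real.log n / ε ^ 2 ∧
      ∀ i j,
        (∫ ω, |x i ω - x j ω| ^ p ∂μ) - ε ≤
          ∑ s, |L ⟨x i, Submodule.subset_span (Set.mem_range_self i)⟩ s -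
                L ⟨x j, Submodule.subset_span (Set.mem_range_self j)⟩ s| ^ p ∧
        ∑ s, |L ⟨x i, Submodule.subset_span (Set.mem_range_self i)⟩ s -
                L ⟨x j, Submodule.subset_span (Set.mem_range_self j)⟩ s| ^ p ≤
          (∫ ω, |x i ω - x j ω| ^ p ∂μ) + ε := by
  obtain ⟨hε0, hε1⟩ := hε
  have hp0 : (0:ℝ) < p := lt_of_lt_of_le one_pos hp
  have hlogn : 0 ≤ Real.log n := by
    rcases Nat.eq_zero_or_pos n with h | h
    · simp [h]
    · exact Real.log_nonneg (by exact_mod_cast h)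
  have hrhs0 : 0 ≤ 32 * Real.exp 1 ^ 2 * (2 * K) ^ (2 * p) * Real.log n / ε ^ 2 := by
    have h2K : (0:ℝ) < 2 * K := by linarith
    have := Real.rpow_nonneg h2K.le (2 * p)
    positivity
  by_cases hsmall : ∀ i j, (∫ ω, |x i ω - x j ω| ^ p ∂μ) ≤ ε
  · refine ⟨0, 0, by simpa using hrhs0, fun i j => ?_⟩
    have hnon : 0 ≤ ∫ ω, |x i ω - x j ω| ^ p ∂μ :=
      integral_nonneg fun ω => Real.rpow_nonneg (abs_nonneg _) p
    constructor
    · simp only [Finset.univ_eq_empty, Finset.sum_empty]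
      linarith [hsmall i j]
    · simp only [Finset.univ_eq_empty, Finset.sum_empty]
      linarith
  · push_neg at hsmall
    obtain ⟨i₀, j₀, hbig⟩ := hsmall
    -- measurable versions
    set x' : Fin n → Ω → ℝ := fun i => ((hx i).1.mk (x i)) with hx'def
    have hx'meas : ∀ i, Measurable (x' i) := fun i =>
      ((hx i).1.stronglyMeasurable_mk).measurable
    have hx'ae : ∀ i, x i =ᵐ[μ] x' i := fun i => (hx i).1.ae_eq_mk
    have hx'mem : ∀ i, MemLp (x' i) (ENNReal.ofReal p) μ := fun i => (hx i).ae_eq (hx'ae i)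
    set M : Ω → ℝ := fun ω => ⨆ i, |x' i ω| with hMdef
    have hMmeas : Measurable M := Measurable.iSup fun i => (hx'meas i).abs
    have hM0 : ∀ ω, 0 ≤ M ω := fun ω => Real.iSup_nonneg fun i => abs_nonneg _
    have hle : ∀ i ω, |x' i ω| ≤ M ω := fun i ω => by
      show |x' i ω| ≤ ⨆ k, |x' k ω|
      exact le_ciSup (Set.Finite.bddAbove (Set.finite_range fun k => |x' k ω|)) i
    have habs : ∀ i j ω, |x' i ω - x' j ω| ≤ 2 * M ω := by
      intro i j ω
      calc |x' i ω - x' j ω| ≤ |x' i ω| + |x' j ω| := abs_sub _ _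
        _ ≤ M ω + M ω := add_le_add (hle i ω) (hle j ω)
        _ = 2 * M ω := by ring
    have hq0 : (ENNReal.ofReal p) ≠ 0 := (ENNReal.ofReal_pos.mpr hp0).ne'
    have hqt : (ENNReal.ofReal p) ≠ ⊤ := ENNReal.ofReal_ne_top
    have hMpmeas : Measurable (fun ω => M ω ^ p) :=
      (Real.continuous_rpow_const hp0.le).measurable.comp hMmeas
    have hMmem : MemLp M (ENNReal.ofReal p) μ := by
      have habs' : ∀ i, MemLp (fun ω => |x' i ω|) (ENNReal.ofReal p) μ := fun i => by
        simpa [Real.norm_eq_abs] using (hx'mem i).norm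
      have hsum : MemLp (fun ω => ∑ i, |x' i ω|) (ENNReal.ofReal p) μ :=
        memLp_finset_sum (μ := μ) (p := ENNReal.ofReal p) Finset.univ
          (f := fun i (ω : Ω) => |x' i ω|) (fun i _ => habs' i)
      refine hsum.of_le hMmeas.aestronglyMeasurable ?_
      filter_upwards with ω
      rw [Real.norm_eq_abs, abs_of_nonneg (hM0 ω)]
      have h1 : M ω ≤ ∑ i, |x' i ω| := by
        haveI : Nonempty (Fin n) := ⟨i₀⟩
        refine ciSup_le fun i => ?_
        exact Finset.single_le_sum (fun k _ => abs_nonneg (x' k ω)) (Finset.mem_univ i)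
      exact h1.trans (le_abs_self _)
    have hMint : Integrable (fun ω => M ω ^ p) μ := by
      have h := hMmem.integrable_norm_rpow hq0 hqt
      refine h.congr (Filter.Eventually.of_forall fun ω => ?_)
      simp [ENNReal.toReal_ofReal hp0.le, Real.norm_eq_abs, abs_of_nonneg (hM0 ω)]
    set Kp : ℝ := ∫ ω, M ω ^ p ∂μ with hKpdef
    have hKp0 : 0 ≤ Kp := integral_nonneg fun ω => Real.rpow_nonneg (hM0 ω) p
    have hKple : Kp ≤ K ^ p := by
      have hMeq : (fun ω => ⨆ i, |x i ω|) =ᵐ[μ] M := by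
        have hall : ∀ᵐ ω ∂μ, ∀ i, x i ω = x' i ω := ae_all_iff.2 hx'ae
        filter_upwards [hall] with ω hω
        exact iSup_congr fun i => by rw [hω i]
      have h1 : eLpNorm M (ENNReal.ofReal p) μ ≤ ENNReal.ofReal K :=
        le_trans (le_of_eq (eLpNorm_congr_ae hMeq).symm) hinc
      rw [hMmem.eLpNorm_eq_integral_rpow_norm hq0 hqt] at h1
      simp only [ENNReal.toReal_ofReal hp0.le] at h1
      have h4 : (∫ a, ‖M a‖ ^ p ∂μ) = Kp :=
        integral_congr_ae (Filter.Eventually.of_forall fun ω => by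
          simp [Real.norm_eq_abs, abs_of_nonneg (hM0 ω)])
      rw [h4] at h1
      have h5 : Kp ^ p⁻¹ ≤ K := (ENNReal.ofReal_le_ofReal_iff hK.le).1 h1
      have h6 := Real.rpow_le_rpow (Real.rpow_nonneg hKp0 _) h5 hp0.le
      rwa [← Real.rpow_mul hKp0, inv_mul_cancel₀ hp0.ne', Real.rpow_one] at h6
    have h2p0 : (0:ℝ) < 2 ^ p := Real.rpow_pos_of_pos two_pos p
    have hKpK : 2 ^ p * Kp ≤ (2 * K) ^ p := by
      rw [Real.mul_rpow (by norm_num) hK.le]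
      exact mul_le_mul_of_nonneg_left hKple h2p0.le
    have hgm : ∀ i j ω, |x' i ω - x' j ω| ^ p ≤ 2 ^ p * M ω ^ p := by
      intro i j ω
      calc |x' i ω - x' j ω| ^ p ≤ (2 * M ω) ^ p :=
            Real.rpow_le_rpow (abs_nonneg _) (habs i j ω) hp0.le
        _ = 2 ^ p * M ω ^ p := Real.mul_rpow (by norm_num) (hM0 ω)
    have hgint : ∀ i j, Integrable (fun ω => |x' i ω - x' j ω| ^ p) μ := by
      intro i j
      have h := ((hx'mem i).sub (hx'mem j)).integrable_norm_rpow hq0 hqt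
      refine h.congr (Filter.Eventually.of_forall fun ω => ?_)
      simp [ENNReal.toReal_ofReal hp0.le, Real.norm_eq_abs]
    have hm_eq : ∀ i j, (∫ ω, |x i ω - x j ω| ^ p ∂μ) = ∫ ω, |x' i ω - x' j ω| ^ p ∂μ := by
      intro i j
      refine integral_congr_ae ?_
      filter_upwards [hx'ae i, hx'ae j] with ω h1 h2
      rw [h1, h2]
    have hgle : ∀ i j, (∫ ω, |x' i ω - x' j ω| ^ p ∂μ) ≤ 2 ^ p * Kp := by
      intro i j
      have h := integral_mono (hgint i j) (hMint.const_mul (2 ^ p))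
        (fun ω => hgm i j ω)
      simpa [integral_const_mul] using h
    have hεlt : ε < 2 ^ p * Kp := by
      have := hbig
      rw [hm_eq i₀ j₀] at this
      exact lt_of_lt_of_le this (hgle i₀ j₀)
    have hKppos : 0 < Kp := by nlinarith
    have hεK : ε < (2 * K) ^ p := lt_of_lt_of_le hεlt hKpK
    have hn2 : 2 ≤ n := by
      rcases Nat.lt_or_ge n 2 with h | h
      · exfalso
        have hn1 : n = 1 := by have := i₀.isLt; omega
        subst hn1
        have hij : i₀ = j₀ := Subsingleton.elim _ _
        rw [hij] at hbig
        have hz : (∫ ω, |x j₀ ω - x j₀ ω| ^ p ∂μ) = 0 := by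
          simp [Real.zero_rpow hp0.ne']
        rw [hz] at hbig
        linarith
      · exact h
    haveI hnemp : Nonempty (Fin n) := ⟨i₀⟩
    -- the sampling measure
    set f : Ω → ℝ≥0 := fun ω => Real.toNNReal (M ω ^ p / Kp) with hfdef
    have hfmeas : Measurable f := (hMpmeas.div_const Kp).real_toNNReal
    set ν : Measure Ω := μ.withDensity (fun ω => (f ω : ℝ≥0∞)) with hνdef
    have hfint : Integrable (fun ω => M ω ^ p / Kp) μ := hMint.div_const Kp
    haveI hνprob : IsProbabilityMeasure ν := by
      constructor
      rw [hνdef, withDensity_apply _ MeasurableSet.univ, setLIntegral_univ]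
      have hcoe : ∀ ω, ((f ω : ℝ≥0∞)) = ENNReal.ofReal (M ω ^ p / Kp) := fun ω => rfl
      calc ∫⁻ ω, (f ω : ℝ≥0∞) ∂μ = ∫⁻ ω, ENNReal.ofReal (M ω ^ p / Kp) ∂μ :=
            lintegral_congr hcoe
        _ = ENNReal.ofReal (∫ ω, M ω ^ p / Kp ∂μ) :=
            (ofReal_integral_eq_lintegral_ofReal hfint
              (Filter.Eventually.of_forall fun ω =>
                div_nonneg (Real.rpow_nonneg (hM0 ω) p) hKp0)).symm
        _ = 1 := by rw [integral_div, ← hKpdef, div_self hKppos.ne']; simp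
    have hν_ac : ν ≪ μ := withDensity_absolutelyContinuous μ _
    -- normalized distance functions
    set G : Fin n → Fin n → Ω → ℝ := fun i j ω => |x' i ω - x' j ω| ^ p / M ω ^ p with hGdef
    have hGmeas : ∀ i j, Measurable (G i j) := fun i j =>
      (((Real.continuous_rpow_const hp0.le).measurable.comp
        ((hx'meas i).sub (hx'meas j)).abs)).div hMpmeas
    have hG0 : ∀ i j ω, 0 ≤ G i j ω := fun i j ω =>
      div_nonneg (Real.rpow_nonneg (abs_nonneg _) p) (Real.rpow_nonneg (hM0 ω) p)
    have hGB : ∀ i j ω, G i j ω ≤ 2 ^ p := by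
      intro i j ω
      show |x' i ω - x' j ω| ^ p / M ω ^ p ≤ 2 ^ p
      rcases eq_or_lt_of_le (Real.rpow_nonneg (hM0 ω) p) with h0 | h0
      · rw [← h0, div_zero]
        exact h2p0.le
      · rw [div_le_iff₀ h0]
        exact hgm i j ω
    have hgz : ∀ i j ω, M ω = 0 → |x' i ω - x' j ω| ^ p = 0 := by
      intro i j ω h0
      have h1 : |x' i ω - x' j ω| = 0 :=
        le_antisymm (by simpa [h0] using habs i j ω) (abs_nonneg _)
      rw [h1, Real.zero_rpow hp0.ne']
    have hGmean : ∀ i j, ∫ ω, G i j ω ∂ν = (∫ ω, |x' i ω - x' j ω| ^ p ∂μ) / Kp := by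
      intro i j
      rw [hνdef, integral_withDensity_eq_integral_smul hfmeas]
      have hpt : ∀ ω, f ω • G i j ω = |x' i ω - x' j ω| ^ p / Kp := by
        intro ω
        have hfω : (f ω : ℝ) = M ω ^ p / Kp :=
          Real.coe_toNNReal _ (div_nonneg (Real.rpow_nonneg (hM0 ω) p) hKp0)
        rw [NNReal.smul_def, smul_eq_mul, hfω]
        show M ω ^ p / Kp * (|x' i ω - x' j ω| ^ p / M ω ^ p) = _
        rcases eq_or_ne (M ω) 0 with h0 | h0
        · rw [hgz i j ω h0]; simp
        · have hMp0 : M ω ^ p ≠ 0 :=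
            (Real.rpow_pos_of_pos (lt_of_le_of_ne (hM0 ω) (Ne.symm h0)) p).ne'
          field_simp
      rw [integral_congr_ae (Filter.Eventually.of_forall hpt), integral_div]
    have hGint : ∀ i j, Integrable (G i j) ν := by
      intro i j
      refine Integrable.mono' (integrable_const ((2:ℝ) ^ p))
        ((hGmeas i j).aestronglyMeasurable) ?_
      filter_upwards with ω
      rw [Real.norm_eq_abs, abs_of_nonneg (hG0 i j ω)]
      exact hGB i j ω
    set mQ : Fin n → Fin n → ℝ := fun i j => (∫ ω, |x' i ω - x' j ω| ^ p ∂μ) / Kp with hmQdef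
    have hmQ0 : ∀ i j, 0 ≤ mQ i j := fun i j =>
      div_nonneg (integral_nonneg fun ω => Real.rpow_nonneg (abs_nonneg _) p) hKp0
    have hmQB : ∀ i j, mQ i j ≤ 2 ^ p := by
      intro i j
      rw [show mQ i j = (∫ ω, |x' i ω - x' j ω| ^ p ∂μ) / Kp from rfl, ← hGmean i j]
      calc ∫ ω, G i j ω ∂ν ≤ ∫ _ω, (2:ℝ) ^ p ∂ν :=
            integral_mono (hGint i j) (integrable_const _) (fun ω => hGB i j ω)
        _ = 2 ^ p := by simp [measure_univ]
    set Z : Fin n → Fin n → Ω → ℝ := fun i j ω => G i j ω - mQ i j with hZdef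
    have hZmeas : ∀ i j, Measurable (Z i j) := fun i j => (hGmeas i j).sub measurable_const
    have hZbound : ∀ i j ω, |Z i j ω| ≤ 2 ^ p := by
      intro i j ω
      rw [abs_le]
      constructor
      · have h1 := hG0 i j ω
        have h2 := hmQB i j
        show -(2 ^ p) ≤ G i j ω - mQ i j
        linarith
      · have h1 := hGB i j ω
        have h2 := hmQ0 i j
        show G i j ω - mQ i j ≤ 2 ^ p
        linarith
    have hZmean : ∀ i j, ∫ ω, Z i j ω ∂ν = 0 := by
      intro i j
      show ∫ ω, (G i j ω - mQ i j) ∂ν = 0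
      rw [integral_sub (hGint i j) (integrable_const _), hGmean i j, integral_const,
        probReal_univ]
      show mQ i j - (1:ℝ) • mQ i j = 0
      simp
    set t : ℝ := ε / Kp with htdef
    have ht0 : 0 < t := div_pos hε0 hKppos
    have hlog2n : Real.log 2 ≤ Real.log n := Real.log_le_log (by norm_num) (by exact_mod_cast hn2)
    have hlogn0 : 0 < Real.log n := lt_of_lt_of_le (Real.log_pos (by norm_num)) hlog2n
    set X : ℝ := (2 * K) ^ (2 * p) * Real.log n / ε ^ 2 with hXdef
    have h2K0 : (0:ℝ) < 2 * K := by linarith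
    have h2Kp0 : (0:ℝ) < (2 * K) ^ p := Real.rpow_pos_of_pos h2K0 p
    have h2p2 : (2 * K) ^ (2 * p) = ((2 * K) ^ p) ^ 2 := by
      rw [show (2:ℝ) * p = p * 2 by ring, Real.rpow_mul h2K0.le, Real.rpow_two]
    have hX' : X = ((2 * K) ^ p) ^ 2 * Real.log n / ε ^ 2 := by rw [hXdef, h2p2]
    have hX0 : 0 < X := by
      rw [hX']
      exact div_pos (mul_pos (by positivity) hlogn0) (pow_pos hε0 2)
    have hXgt : Real.log 2 < X := by
      have h1 : ε ^ 2 < ((2 * K) ^ p) ^ 2 := by nlinarith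
      rw [hX', lt_div_iff₀ (pow_pos hε0 2)]
      nlinarith [mul_lt_mul_of_pos_left h1 (Real.log_pos (by norm_num : (1:ℝ) < 2)),
        mul_le_mul_of_nonneg_right hlog2n (sq_nonneg ((2 * K) ^ p))]
    set d : ℕ := ⌊12 * X⌋₊ + 1 with hddef
    have hd12 : 12 * X < (d : ℝ) := by
      rw [hddef]; push_cast; exact Nat.lt_floor_add_one _
    have hd0 : (0:ℝ) < d := by
      rw [hddef]; push_cast; positivity
    have hd_ub : (d : ℝ) ≤ 32 * Real.exp 1 ^ 2 * (2 * K) ^ (2 * p) * Real.log n / ε ^ 2 := by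
      have h1 : (d : ℝ) ≤ 12 * X + 1 := by
        rw [hddef]; push_cast
        have := Nat.floor_le (by positivity : (0:ℝ) ≤ 12 * X)
        linarith
      have hlog2 : (0.6931471803 : ℝ) < Real.log 2 := Real.log_two_gt_d9
      have h2 : (1:ℝ) ≤ 2 * X := by linarith [hXgt, hlog2]
      have he1 : (1:ℝ) ≤ Real.exp 1 := by
        have := Real.add_one_le_exp 1
        linarith
      have h3a : (14:ℝ) ≤ 32 * Real.exp 1 ^ 2 := by nlinarith [he1]
      have h3 : (14:ℝ) * X ≤ 32 * Real.exp 1 ^ 2 * X :=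
        mul_le_mul_of_nonneg_right h3a hX0.le
      have h4 : 32 * Real.exp 1 ^ 2 * X = 32 * Real.exp 1 ^ 2 * (2 * K) ^ (2 * p) * Real.log n / ε ^ 2 := by
        rw [hXdef]; ring
      linarith
    set P : Measure (Fin d → Ω) := Measure.pi (fun _ => ν) with hPdef
    haveI hPprob : IsProbabilityMeasure P := by rw [hPdef]; infer_instance
    set β : ℝ := Real.exp (-((d:ℝ) * t ^ 2 / (4 * ((2:ℝ) ^ p) ^ 2))) with hβdef
    have hchern : ∀ i j, (P {y : Fin d → Ω | (d:ℝ) * t ≤ ∑ s, Z i j (y s)}).toReal ≤ β :=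
      fun i j => chernoff_pi ν (hZmeas i j) h2p0 (hZbound i j) (hZmean i j) d ht0
    have hchern' : ∀ i j,
        (P {y : Fin d → Ω | (d:ℝ) * t ≤ ∑ s, (-(Z i j (y s)))}).toReal ≤ β := by
      intro i j
      have hmZmeas : Measurable (fun ω => -(Z i j ω)) := (hZmeas i j).neg
      have hmb : ∀ ω, |(-(Z i j ω))| ≤ 2 ^ p := fun ω => by
        rw [abs_neg]; exact hZbound i j ω
      have hmm : ∫ ω, -(Z i j ω) ∂ν = 0 := by rw [integral_neg, hZmean i j, neg_zero]
      exact chernoff_pi ν hmZmeas h2p0 hmb hmm d ht0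
    set Bad : Set (Fin d → Ω) := ⋃ i, ⋃ j,
      ({y : Fin d → Ω | (d:ℝ) * t ≤ ∑ s, Z i j (y s)} ∪
       {y : Fin d → Ω | (d:ℝ) * t ≤ ∑ s, (-(Z i j (y s)))}) with hBaddef
    have hn0 : (0:ℝ) < n := by
      have : (2:ℝ) ≤ n := by exact_mod_cast hn2
      linarith
    have hPBad : P Bad < 1 := by
      have hβ0 : 0 ≤ β := (Real.exp_pos _).le
      have hstep : ∀ i j, P ({y : Fin d → Ω | (d:ℝ) * t ≤ ∑ s, Z i j (y s)} ∪
          {y : Fin d → Ω | (d:ℝ) * t ≤ ∑ s, (-(Z i j (y s)))}) ≤ ENNReal.ofReal (2 * β) := by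
        intro i j
        refine (measure_union_le _ _).trans ?_
        have e1 : P {y : Fin d → Ω | (d:ℝ) * t ≤ ∑ s, Z i j (y s)} ≤ ENNReal.ofReal β :=
          (ENNReal.le_ofReal_iff_toReal_le (measure_ne_top _ _) hβ0).2 (hchern i j)
        have e2 : P {y : Fin d → Ω | (d:ℝ) * t ≤ ∑ s, (-(Z i j (y s)))} ≤ ENNReal.ofReal β :=
          (ENNReal.le_ofReal_iff_toReal_le (measure_ne_top _ _) hβ0).2 (hchern' i j)
        calc _ ≤ ENNReal.ofReal β + ENNReal.ofReal β := add_le_add e1 e2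
          _ = ENNReal.ofReal (2 * β) := by rw [← ENNReal.ofReal_add hβ0 hβ0, two_mul]
      have h1 : P Bad ≤ ∑ _i : Fin n, ∑ _j : Fin n, ENNReal.ofReal (2 * β) := by
        rw [hBaddef]
        refine (measure_iUnion_fintype_le _ _).trans ?_
        refine Finset.sum_le_sum fun i _ => ?_
        refine (measure_iUnion_fintype_le _ _).trans ?_
        exact Finset.sum_le_sum fun j _ => hstep i j
      have h2 : ∑ _i : Fin n, ∑ _j : Fin n, ENNReal.ofReal (2 * β) =
          ENNReal.ofReal ((n:ℝ) * ((n:ℝ) * (2 * β))) := by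
        have hsplit : ENNReal.ofReal ((n:ℝ) * ((n:ℝ) * (2 * β))) =
            (n : ℝ≥0∞) * ((n : ℝ≥0∞) * ENNReal.ofReal (2 * β)) := by
          rw [ENNReal.ofReal_mul (by positivity : (0:ℝ) ≤ (n:ℝ)),
            ENNReal.ofReal_mul (by positivity : (0:ℝ) ≤ (n:ℝ)), ENNReal.ofReal_natCast]
        rw [Finset.sum_const, Finset.sum_const, Finset.card_univ, Fintype.card_fin,
          nsmul_eq_mul, nsmul_eq_mul, hsplit]
      -- numeric core
      have hA : 3 * Real.log n < (d:ℝ) * t ^ 2 / (4 * ((2:ℝ) ^ p) ^ 2) := by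
        have ht2 : t ^ 2 = ε ^ 2 / Kp ^ 2 := by rw [htdef, div_pow]
        have hEq : (d:ℝ) * t ^ 2 / (4 * ((2:ℝ) ^ p) ^ 2) =
            (d:ℝ) * ε ^ 2 / (4 * (Kp * 2 ^ p) ^ 2) := by
          rw [ht2]; field_simp
        have hden : (0:ℝ) < 4 * (Kp * 2 ^ p) ^ 2 := by positivity
        have hden2 : 4 * (Kp * 2 ^ p) ^ 2 ≤ 4 * ((2 * K) ^ p) ^ 2 := by
          nlinarith [hKpK, hKp0, h2p0.le]
        have hstep1 : (d:ℝ) * ε ^ 2 / (4 * ((2 * K) ^ p) ^ 2) ≤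
            (d:ℝ) * ε ^ 2 / (4 * (Kp * 2 ^ p) ^ 2) :=
          (div_le_div_iff_of_pos_left (by positivity) (by positivity) hden).2 hden2
        have hstep2 : 3 * Real.log n < (d:ℝ) * ε ^ 2 / (4 * ((2 * K) ^ p) ^ 2) := by
          rw [lt_div_iff₀ (by positivity)]
          have h13 : 12 * X * ε ^ 2 = 12 * ((2 * K) ^ p) ^ 2 * Real.log n := by
            rw [hX']; field_simp
          nlinarith [mul_lt_mul_of_pos_right hd12 (pow_pos hε0 2)]
        calc 3 * Real.log n < (d:ℝ) * ε ^ 2 / (4 * ((2 * K) ^ p) ^ 2) := hstep2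
          _ ≤ (d:ℝ) * ε ^ 2 / (4 * (Kp * 2 ^ p) ^ 2) := hstep1
          _ = (d:ℝ) * t ^ 2 / (4 * ((2:ℝ) ^ p) ^ 2) := hEq.symm
      have hlog2n2 : Real.log (2 * (n:ℝ) ^ 2) ≤ 3 * Real.log n := by
        rw [Real.log_mul (by norm_num) (by positivity), Real.log_pow]
        push_cast
        linarith
      have hβlt : β < 1 / (2 * (n:ℝ) ^ 2) := by
        rw [hβdef]
        have h1 : -((d:ℝ) * t ^ 2 / (4 * ((2:ℝ) ^ p) ^ 2)) < -Real.log (2 * (n:ℝ) ^ 2) := by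
          linarith
        calc Real.exp (-((d:ℝ) * t ^ 2 / (4 * ((2:ℝ) ^ p) ^ 2)))
            < Real.exp (-Real.log (2 * (n:ℝ) ^ 2)) := Real.exp_lt_exp.2 h1
          _ = 1 / (2 * (n:ℝ) ^ 2) := by
              rw [Real.exp_neg, Real.exp_log (by positivity), one_div]
      have hkey : (n:ℝ) * ((n:ℝ) * (2 * β)) < 1 := by
        have h2n2 : (0:ℝ) < 2 * (n:ℝ) ^ 2 := by positivity
        calc (n:ℝ) * ((n:ℝ) * (2 * β)) = (2 * (n:ℝ) ^ 2) * β := by ring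
          _ < (2 * (n:ℝ) ^ 2) * (1 / (2 * (n:ℝ) ^ 2)) := mul_lt_mul_of_pos_left hβlt h2n2
          _ = 1 := by field_simp
      calc P Bad ≤ ENNReal.ofReal ((n:ℝ) * ((n:ℝ) * (2 * β))) := h1.trans h2.le
        _ < 1 := ENNReal.ofReal_lt_one.2 hkey
    -- the good full-measure set for a.e. equality
    have haeT : ∀ᵐ ω ∂ν, ∀ i, x i ω = x' i ω :=
      (ae_all_iff.2 hx'ae).filter_mono hν_ac.ae_le
    obtain ⟨N, hNsub, hNmeas, hN0⟩ := exists_measurable_superset_of_null (ae_iff.1 haeT)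
    set T : Set Ω := Nᶜ with hTdef
    have hTmeas : MeasurableSet T := hNmeas.compl
    have hνT : ν T = 1 := by
      rw [hTdef, measure_compl hNmeas (measure_ne_top _ _), hN0, measure_univ, tsub_zero]
    have hTprop : ∀ ω ∈ T, ∀ i, x i ω = x' i ω := by
      intro ω hω i
      by_contra hc
      exact hω (hNsub (fun hall => hc (hall i)))
    have hGoodT : P {y : Fin d → Ω | ∀ s, y s ∈ T} = 1 := by
      have hset : {y : Fin d → Ω | ∀ s, y s ∈ T} = Set.pi Set.univ (fun _ => T) := by
        ext z; simp [Set.mem_pi]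
      rw [hset, hPdef, Measure.pi_pi]
      simp [hνT]
    have hex : ∃ y : Fin d → Ω, y ∉ Bad ∧ ∀ s, y s ∈ T := by
      by_contra hcon
      push_neg at hcon
      have hsub : Set.univ ⊆ Bad ∪ {y : Fin d → Ω | ∀ s, y s ∈ T}ᶜ := by
        intro z _
        rcases Classical.em (z ∈ Bad) with h | h
        · exact Or.inl h
        · obtain ⟨s, hs⟩ := hcon z h
          exact Or.inr (fun hall => hs (hall s))
      have hms : MeasurableSet {y : Fin d → Ω | ∀ s, y s ∈ T} := by
        have heq : {y : Fin d → Ω | ∀ s, y s ∈ T} = ⋂ s, (fun y : Fin d → Ω => y s) ⁻¹' T := by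
          ext z; simp
        rw [heq]
        exact MeasurableSet.iInter fun s => (measurable_pi_apply s) hTmeas
      have hc0 : P ({y : Fin d → Ω | ∀ s, y s ∈ T}ᶜ) = 0 := by
        rw [measure_compl hms (measure_ne_top _ _), hGoodT, measure_univ, tsub_self]
      have hge : (1:ℝ≥0∞) ≤ P Bad := by
        calc (1:ℝ≥0∞) = P Set.univ := measure_univ.symm
          _ ≤ P (Bad ∪ {y : Fin d → Ω | ∀ s, y s ∈ T}ᶜ) := measure_mono hsub
          _ ≤ P Bad + P ({y : Fin d → Ω | ∀ s, y s ∈ T}ᶜ) := measure_union_le _ _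
          _ = P Bad := by rw [hc0, add_zero]
      exact absurd hge hPBad.not_ge
    obtain ⟨y, hyBad, hyT⟩ := hex
    have hybound : ∀ i j, |∑ s, Z i j (y s)| < (d:ℝ) * t := by
      intro i j
      have h1 : y ∉ ({y : Fin d → Ω | (d:ℝ) * t ≤ ∑ s, Z i j (y s)} ∪
          {y : Fin d → Ω | (d:ℝ) * t ≤ ∑ s, (-(Z i j (y s)))}) := by
        intro hmem
        exact hyBad (by rw [hBaddef]; exact Set.mem_iUnion.2 ⟨i, Set.mem_iUnion.2 ⟨j, hmem⟩⟩)
      rw [Set.mem_union] at h1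
      push_neg at h1
      obtain ⟨ha, hb⟩ := h1
      simp only [Set.mem_setOf_eq, not_le] at ha hb
      have hb' : -∑ s, Z i j (y s) < (d:ℝ) * t := by
        have hneg : ∑ s, (-(Z i j (y s))) = -∑ s, Z i j (y s) := by
          rw [Finset.sum_neg_distrib]
        linarith [hb, hneg ▸ hb]
      rw [abs_lt]
      exact ⟨by linarith, ha⟩
    -- the linear map
    set c : ℝ := (Kp / (d:ℝ)) ^ (p⁻¹) with hcdef
    have hc0 : 0 ≤ c := Real.rpow_nonneg (div_nonneg hKp0 hd0.le) _
    set w : Ω → ℝ := fun ω => c / M ω with hwdef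
    have hw0 : ∀ ω, 0 ≤ w ω := fun ω => div_nonneg hc0 (hM0 ω)
    refine ⟨d, { toFun := fun v s => w (y s) * (v : Ω → ℝ) (y s)
                 map_add' := by
                   intro v u
                   funext s
                   simp only [Submodule.coe_add, Pi.add_apply]
                   ring
                 map_smul' := by
                   intro r v
                   funext s
                   simp only [Submodule.coe_smul, Pi.smul_apply, smul_eq_mul,
                     RingHom.id_apply]
                   ring }, hd_ub, ?_⟩
    intro i j
    simp only [LinearMap.coe_mk, AddHom.coe_mk]
    have hkey : ∀ ω ∈ T, |w ω * x i ω - w ω * x j ω| ^ p = (Kp / (d:ℝ)) * G i j ω := by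
      intro ω hω
      rw [hTprop ω hω i, hTprop ω hω j]
      have hGform : G i j ω = |x' i ω - x' j ω| ^ p / M ω ^ p := rfl
      rcases eq_or_ne (M ω) 0 with h0 | h0
      · have hwz : w ω = 0 := by
          show c / M ω = 0
          rw [h0, div_zero]
        have hGz : G i j ω = 0 := by
          rw [hGform, hgz i j ω h0, zero_div]
        rw [hwz, hGz]
        simp [Real.zero_rpow hp0.ne']
      · have hMpos : 0 < M ω := lt_of_le_of_ne (hM0 ω) (Ne.symm h0)
        have hMp : (0:ℝ) < M ω ^ p := Real.rpow_pos_of_pos hMpos p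
        have h1 : w ω * x' i ω - w ω * x' j ω = w ω * (x' i ω - x' j ω) := by ring
        rw [h1, abs_mul, abs_of_nonneg (hw0 ω), Real.mul_rpow (hw0 ω) (abs_nonneg _)]
        have h2 : w ω ^ p = (Kp / (d:ℝ)) / M ω ^ p := by
          show (c / M ω) ^ p = _
          rw [Real.div_rpow hc0 (hM0 ω)]
          congr 1
          show ((Kp / (d:ℝ)) ^ (p⁻¹)) ^ p = Kp / (d:ℝ)
          rw [← Real.rpow_mul (div_nonneg hKp0 hd0.le), inv_mul_cancel₀ hp0.ne',
            Real.rpow_one]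
        rw [h2, hGform]
        field_simp
    have hsumeq : ∑ s, |w (y s) * x i (y s) - w (y s) * x j (y s)| ^ p =
        (Kp / (d:ℝ)) * ∑ s, G i j (y s) := by
      rw [Finset.mul_sum]
      exact Finset.sum_congr rfl fun s _ => hkey (y s) (hyT s)
    have hZsum : ∑ s, Z i j (y s) = ∑ s, G i j (y s) - (d:ℝ) * mQ i j := by
      show ∑ s, (G i j (y s) - mQ i j) = _
      rw [Finset.sum_sub_distrib, Finset.sum_const, Finset.card_univ, Fintype.card_fin,
        nsmul_eq_mul]
    have hb2 := hybound i j
    rw [hZsum, abs_lt] at hb2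
    have hmrel : (∫ ω, |x i ω - x j ω| ^ p ∂μ) = Kp * mQ i j := by
      rw [hm_eq i j, show mQ i j = (∫ ω, |x' i ω - x' j ω| ^ p ∂μ) / Kp from rfl]
      field_simp
    have hKpt : Kp * t = ε := by
      rw [htdef]; field_simp
    have hfold : (Kp / (d:ℝ)) * ((d:ℝ) * mQ i j - (d:ℝ) * t) = Kp * mQ i j - ε := by
      rw [← hKpt]; field_simp
    have hfold2 : (Kp / (d:ℝ)) * ((d:ℝ) * mQ i j + (d:ℝ) * t) = Kp * mQ i j + ε := by
      rw [← hKpt]; field_simp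
    have hKd0 : (0:ℝ) ≤ Kp / (d:ℝ) := div_nonneg hKp0 hd0.le
    constructor
    · rw [hsumeq, hmrel]
      have h5 : (Kp / (d:ℝ)) * ((d:ℝ) * mQ i j - (d:ℝ) * t) ≤
          (Kp / (d:ℝ)) * ∑ s, G i j (y s) := by
        apply mul_le_mul_of_nonneg_left _ hKd0
        linarith [hb2.1]
      linarith [hfold ▸ h5]
    · rw [hsumeq, hmrel]
      have h5 : (Kp / (d:ℝ)) * ∑ s, G i j (y s) ≤
          (Kp / (d:ℝ)) * ((d:ℝ) * mQ i j + (d:ℝ) * t) := by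
        apply mul_le_mul_of_nonneg_left _ hKd0
        linarith [hb2.2]
      linarith [hfold2 ▸ h5]
end

section
/- There exists a universal constant S ∈ (0,∞) such that the following holds for every n ∈ ℕ with n ≥ 2. Let x_1,…,x_n ∈ ℝ^n satisfy ‖x_i‖_{L_2^n} ≤ 1 for all i, where ‖a‖_{L_2^n} = ((1/n)Σ_{j=1}^n a_j²)^{1/2}, and let U be a uniformly distributed (Haar) random orthogonal matrix in O(n). Then E[ max_{i∈{1,…,n}} ‖U x_i‖_{L_∞^n} ] ≤ S·√(log n), where ‖a‖_{L_∞^n} = max_j |a_j|. -/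
open MeasureTheory
open Matrix

variable {n : ℕ}

/-- Householder reflection matrix. -/
noncomputable def house (w : Fin n → ℝ) : Matrix (Fin n) (Fin n) ℝ :=
  1 - (2 / (w ⬝ᵥ w)) • Matrix.vecMulVec w w

lemma vecMulVec_mulVec (w y : Fin n → ℝ) :
    (Matrix.vecMulVec w w).mulVec y = (w ⬝ᵥ y) • w := by
  ext i
  simp [Matrix.mulVec, Matrix.vecMulVec_apply, dotProduct, Finset.mul_sum,
    mul_comm, mul_assoc, mul_left_comm]

lemma house_mulVec (w y : Fin n → ℝ) :
    (house w).mulVec y = y - ((2 / (w ⬝ᵥ w)) * (w ⬝ᵥ y)) • w := by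
  simp [house, Matrix.sub_mulVec, Matrix.smul_mulVec, _root_.vecMulVec_mulVec, smul_smul]

lemma house_mem (w : Fin n → ℝ) : house w ∈ Matrix.orthogonalGroup (Fin n) ℝ := by
  rw [Matrix.mem_orthogonalGroup_iff]
  have hsym : star (house w) = house w := by
    have : star (Matrix.vecMulVec w w) = Matrix.vecMulVec w w := by
      ext i j
      simp [Matrix.star_apply, Matrix.vecMulVec_apply, mul_comm]
    simp only [house, star_sub, star_one, star_smul, this, star_trivial]
  rw [← Matrix.conjTranspose_eq_transpose_of_trivial, ← Matrix.star_eq_conjTranspose, hsym]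
  by_cases hw : w ⬝ᵥ w = 0
  · have hw0 : w = 0 := by
      ext i
      have := (Finset.sum_eq_zero_iff_of_nonneg (fun j _ => mul_self_nonneg (w j))).mp hw i
        (Finset.mem_univ i)
      exact mul_self_eq_zero.mp this
    have : Matrix.vecMulVec w w = 0 := by
      ext i j; simp [Matrix.vecMulVec_apply, hw0]
    simp [house, this]
  · have hAA : Matrix.vecMulVec w w * Matrix.vecMulVec w w = (w ⬝ᵥ w) • Matrix.vecMulVec w w := by
      ext i j
      simp only [Matrix.mul_apply, Matrix.vecMulVec_apply, Matrix.smul_apply, smul_eq_mul,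
        dotProduct]
      rw [Finset.sum_mul]
      congr 1
      ext l
      ring
    have hexp : house w * house w =
        1 - (2 * (2 / (w ⬝ᵥ w))) • Matrix.vecMulVec w w
          + ((2 / (w ⬝ᵥ w)) * (2 / (w ⬝ᵥ w))) • (Matrix.vecMulVec w w * Matrix.vecMulVec w w) := by
      simp only [house, sub_mul, mul_sub, one_mul, mul_one, Matrix.smul_mul, Matrix.mul_smul,
        smul_smul, two_smul]
      module
    rw [hexp, hAA, smul_smul]
    have h1 : (2 / (w ⬝ᵥ w)) * (2 / (w ⬝ᵥ w)) * (w ⬝ᵥ w) = 2 * (2 / (w ⬝ᵥ w)) := by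
      field_simp
    rw [h1]
    abel

lemma sum_exp_signs (c : Fin n → ℝ) :
    ∑ s : Fin n → Bool, Real.exp (∑ l, (if s l then (1:ℝ) else -1) * c l)
      = ∏ l, (Real.exp (c l) + Real.exp (-(c l))) := by
  have h1 : ∀ s : Fin n → Bool, Real.exp (∑ l, (if s l then (1:ℝ) else -1) * c l)
      = ∏ l, Real.exp ((if s l then (1:ℝ) else -1) * c l) := fun s => Real.exp_sum _ _
  rw [Finset.sum_congr rfl (fun s _ => h1 s)]
  have h2 := Finset.prod_univ_sum (fun _ : Fin n => (Finset.univ : Finset Bool))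
    (fun l b => Real.exp ((if b then (1:ℝ) else -1) * c l))
  rw [Fintype.piFinset_univ] at h2
  rw [← h2]
  congr 1
  ext l
  simp [Finset.sum_boole]

lemma sum_exp_signs_le (t : ℝ) (y : Fin n → ℝ) :
    ∑ s : Fin n → Bool, Real.exp (t * ∑ l, (if s l then (1:ℝ) else -1) * y l)
      ≤ 2^n * Real.exp (t^2 * (∑ l, (y l)^2) / 2) := by
  have h1 : ∀ s : Fin n → Bool, t * ∑ l, (if s l then (1:ℝ) else -1) * y l
      = ∑ l, (if s l then (1:ℝ) else -1) * (t * y l) := by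
    intro s; rw [Finset.mul_sum]; congr 1; ext l; ring
  calc ∑ s : Fin n → Bool, Real.exp (t * ∑ l, (if s l then (1:ℝ) else -1) * y l)
      = ∏ l, (Real.exp (t * y l) + Real.exp (-(t * y l))) := by
        rw [Finset.sum_congr rfl (fun s _ => by rw [h1 s])]; exact sum_exp_signs _
    _ ≤ ∏ l, 2 * Real.exp ((t * y l)^2 / 2) := by
        apply Finset.prod_le_prod
        · intro l _; positivity
        · intro l _
          have := Real.cosh_le_exp_half_sq (t * y l)
          rw [Real.cosh_eq] at this
          linarith
    _ = 2^n * Real.exp (∑ l, (t * y l)^2 / 2) := by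
        rw [Finset.prod_mul_distrib, Finset.prod_const, Finset.card_univ, Fintype.card_fin,
          ← Real.exp_sum]
    _ = 2^n * Real.exp (t^2 * (∑ l, (y l)^2) / 2) := by
        have h3 : (∑ l, (t * y l)^2 / 2) = t^2 * (∑ l, (y l)^2) / 2 := by
          rw [Finset.mul_sum, Finset.sum_div]
          exact Finset.sum_congr rfl (fun l _ => by ring)
        rw [h3]

lemma exp_abs_le (u : ℝ) : Real.exp |u| ≤ Real.exp u + Real.exp (-u) := by
  rcases abs_cases u with ⟨h, _⟩ | ⟨h, _⟩
  · rw [h]; nlinarith [Real.exp_pos (-u)]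
  · rw [h]; nlinarith [Real.exp_pos u]

lemma pow_le_exp_add (t a : ℝ) (ht : 0 < t) (m : ℕ) :
    a^(2*m) ≤ (Nat.factorial (2*m) : ℝ) / t^(2*m) * (Real.exp (t*a) + Real.exp (-(t*a))) := by
  have hx : (0:ℝ) ≤ |t * a| := abs_nonneg _
  have h1 : |t * a|^(2*m) / Nat.factorial (2*m) ≤ Real.exp |t * a| := by
    calc |t * a|^(2*m) / Nat.factorial (2*m) ≤ ∑ i ∈ Finset.range (2*m+1), |t * a|^i / Nat.factorial i := by
          apply Finset.single_le_sum (f := fun i => |t * a|^i / (Nat.factorial i : ℝ))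
          · intro i _; positivity
          · simp
      _ ≤ Real.exp |t * a| := Real.sum_le_exp_of_nonneg hx _
  have h2 : Real.exp |t * a| ≤ Real.exp (t*a) + Real.exp (-(t*a)) := exp_abs_le _
  have h3 : a^(2*m) = |t * a|^(2*m) / t^(2*m) := by
    rw [abs_mul, mul_pow, abs_of_pos ht, pow_abs,
      abs_of_nonneg ((even_two_mul m).pow_nonneg a)]
    field_simp
  rw [h3]
  rw [div_le_iff₀ (by positivity : (0:ℝ) < t^(2*m))]
  have hfac : (0:ℝ) < (Nat.factorial (2*m) : ℝ) := by positivity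
  calc |t * a|^(2*m) ≤ (Nat.factorial (2*m) : ℝ) * Real.exp |t*a| := by
        have h4 := (div_le_iff₀ hfac).mp h1; linarith
    _ ≤ (Nat.factorial (2*m) : ℝ) * (Real.exp (t*a) + Real.exp (-(t*a))) := by nlinarith
    _ = (Nat.factorial (2*m) : ℝ) / t^(2*m) * (Real.exp (t*a) + Real.exp (-(t*a))) * t^(2*m) := by
        field_simp

lemma rad_moment (hn : 1 ≤ n) {k : ℕ} (hk : 1 ≤ k) (y : Fin n → ℝ) (hy : ∑ l, (y l)^2 ≤ n) :
    ∑ s : Fin n → Bool, (∑ l, (if s l then (1:ℝ) else -1) * y l)^(2*k)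
      ≤ 2^n * (2 * (2*k:ℝ)^k * Real.exp k * (n:ℝ)^k) := by
  have hn0 : (0:ℝ) < n := by exact_mod_cast Nat.lt_of_lt_of_le Nat.zero_lt_one hn
  have hk0 : (0:ℝ) < (k:ℝ) := by exact_mod_cast Nat.lt_of_lt_of_le Nat.zero_lt_one hk
  set t := Real.sqrt (2*k/n) with htdef
  have htpos : 0 < t := Real.sqrt_pos.mpr (by positivity)
  have ht2 : t^2 = 2*k/n := Real.sq_sqrt (by positivity)
  set a : (Fin n → Bool) → ℝ := fun s => ∑ l, (if s l then (1:ℝ) else -1) * y l with ha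
  have hexpbd : t^2 * (∑ l, (y l)^2) / 2 ≤ k := by
    rw [ht2]
    have h7 : 2*(k:ℝ)/n * (∑ l, (y l)^2) / 2 = k * ((∑ l, (y l)^2) / n) := by
      field_simp
    rw [h7]
    calc (k:ℝ) * ((∑ l, (y l)^2) / n) ≤ k * 1 := by
          apply mul_le_mul_of_nonneg_left _ hk0.le
          rw [div_le_one hn0]; exact hy
      _ = k := mul_one _
  have hcb : (Nat.factorial (2*k):ℝ) / t^(2*k) ≤ (2*(k:ℝ))^k * (n:ℝ)^k := by
    have h5 : (Nat.factorial (2*k):ℝ) ≤ ((2*k:ℕ):ℝ)^(2*k) := by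
      exact_mod_cast Nat.factorial_le_pow (2*k)
    have h6 : ((2*(k:ℝ)))^(2*k) / t^(2*k) = (2*(k:ℝ))^k * (n:ℝ)^k := by
      rw [pow_mul t, ht2, pow_mul (2*(k:ℝ)), ← div_pow, ← mul_pow]
      congr 1
      field_simp
    rw [← h6]
    apply div_le_div_of_nonneg_right _ (by positivity)
    · push_cast at h5 ⊢; exact h5
  have key : ∀ s : Fin n → Bool, (a s)^(2*k)
      ≤ (Nat.factorial (2*k):ℝ) / t^(2*k) * (Real.exp (t * a s) + Real.exp (-(t * a s))) :=
    fun s => pow_le_exp_add t (a s) htpos k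
  have hsum1 : ∑ s : Fin n → Bool, Real.exp (t * a s)
      ≤ 2^n * Real.exp (t^2 * (∑ l, (y l)^2) / 2) := sum_exp_signs_le t y
  have hsum2 : ∑ s : Fin n → Bool, Real.exp (-(t * a s))
      ≤ 2^n * Real.exp (t^2 * (∑ l, (y l)^2) / 2) := by
    have h8 : ∀ s : Fin n → Bool, -(t * a s) = (-t) * a s := fun s => by ring
    rw [Finset.sum_congr rfl (fun s _ => by rw [h8 s])]
    have h9 := sum_exp_signs_le (-t) y
    rw [neg_sq] at h9
    exact h9
  have hE : Real.exp (t^2 * (∑ l, (y l)^2) / 2) ≤ Real.exp k := Real.exp_le_exp.mpr hexpbd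
  calc ∑ s : Fin n → Bool, (a s)^(2*k)
      ≤ ∑ s : Fin n → Bool,
          (Nat.factorial (2*k):ℝ) / t^(2*k) * (Real.exp (t * a s) + Real.exp (-(t * a s))) :=
        Finset.sum_le_sum (fun s _ => key s)
    _ = (Nat.factorial (2*k):ℝ) / t^(2*k) *
          ((∑ s : Fin n → Bool, Real.exp (t * a s)) + ∑ s : Fin n → Bool, Real.exp (-(t * a s))) := by
        rw [← Finset.mul_sum, Finset.sum_add_distrib]
    _ ≤ (Nat.factorial (2*k):ℝ) / t^(2*k) *
          (2^n * Real.exp (t^2 * (∑ l, (y l)^2) / 2) + 2^n * Real.exp (t^2 * (∑ l, (y l)^2) / 2)) :=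
        mul_le_mul_of_nonneg_left (add_le_add hsum1 hsum2) (by positivity)
    _ ≤ ((2*(k:ℝ))^k * (n:ℝ)^k) * (2^n * Real.exp k + 2^n * Real.exp k) := by
        apply mul_le_mul hcb _ (by positivity) (by positivity)
        have h2n : (0:ℝ) ≤ 2^n := by positivity
        nlinarith [hE]
    _ = 2^n * (2 * (2*(k:ℝ))^k * Real.exp k * (n:ℝ)^k) := by ring

lemma orth_norm {W : Matrix (Fin n) (Fin n) ℝ} (hW : W ∈ Matrix.orthogonalGroup (Fin n) ℝ)
    (v : Fin n → ℝ) : ∑ j, (W.mulVec v j)^2 = ∑ j, (v j)^2 := by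
  have h := (Matrix.mem_orthogonalGroup_iff' (n := Fin n) (R := ℝ)).mp hW
  have hTW : Wᵀ * W = 1 := by
    exact h
  have key : W.mulVec v ⬝ᵥ W.mulVec v = v ⬝ᵥ v := by
    rw [Matrix.dotProduct_mulVec, ← Matrix.mulVec_transpose, Matrix.mulVec_mulVec, hTW,
      Matrix.one_mulVec]
  calc ∑ j, (W.mulVec v j)^2 = W.mulVec v ⬝ᵥ W.mulVec v := by simp [dotProduct, sq]
    _ = v ⬝ᵥ v := key
    _ = ∑ j, (v j)^2 := by simp [dotProduct, sq]

lemma house_eps (hn : 2 ≤ n) (s : Fin n → Bool) (j : Fin n) (y : Fin n → ℝ) :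
    ((house (fun l => (if s l then (1:ℝ) else -1) - (if l = j then Real.sqrt n else 0))).mulVec y) j
      = (∑ l, (if s l then (1:ℝ) else -1) * y l) / Real.sqrt n := by
  have hn0 : (0:ℝ) < n := by
    have : (0:ℕ) < n := by omega
    exact_mod_cast this
  set r := Real.sqrt n with hrdef
  have hr2 : r^2 = n := Real.sq_sqrt hn0.le
  have hr1 : 1 < r := by
    rw [hrdef, show (1:ℝ) = Real.sqrt 1 by simp]
    apply Real.sqrt_lt_sqrt (by norm_num)
    exact_mod_cast hn
  set ε : Fin n → ℝ := fun l => if s l then (1:ℝ) else -1 with hε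
  set w : Fin n → ℝ := fun l => ε l - (if l = j then r else 0) with hw
  have hεsq : ∀ l, ε l ^ 2 = 1 := by
    intro l; by_cases h : s l <;> simp [hε, h]
  have hεj : ε j ≤ 1 := by by_cases h : s j <;> simp [hε, h] <;> norm_num
  have hrεj : 0 < r - ε j := by linarith
  have hww : w ⬝ᵥ w = 2*r*(r - ε j) := by
    have hterm : ∀ l, w l * w l = ε l^2 + (if l = j then -2*(ε j)*r + r^2 else 0) := by
      intro l
      simp only [hw]
      split_ifs with h
      · subst h; ring
      · ring
    rw [dotProduct]
    rw [Finset.sum_congr rfl (fun l _ => hterm l), Finset.sum_add_distrib]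
    rw [Finset.sum_congr rfl (fun l _ => hεsq l), Finset.sum_const, Finset.card_univ,
      Fintype.card_fin, Finset.sum_ite_eq' Finset.univ j (fun _ => -2*(ε j)*r + r^2)]
    simp only [Finset.mem_univ, if_pos, nsmul_eq_mul, mul_one]
    rw [← hr2]; ring
  have hwy : w ⬝ᵥ y = (∑ l, ε l * y l) - r * y j := by
    have hterm : ∀ l, w l * y l = ε l * y l - (if l = j then r * y j else 0) := by
      intro l
      simp only [hw]
      split_ifs with h
      · subst h; ring
      · ring
    rw [dotProduct]
    rw [Finset.sum_congr rfl (fun l _ => hterm l), Finset.sum_sub_distrib,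
      Finset.sum_ite_eq' Finset.univ j (fun _ => r * y j)]
    simp
  have hwj : w j = ε j - r := by simp [hw]
  have hmv := house_mulVec w y
  have : (house w).mulVec y j = y j - ((2 / (w ⬝ᵥ w)) * (w ⬝ᵥ y)) * w j := by
    rw [hmv]; simp
  rw [this, hww, hwy, hwj]
  have hr0 : r ≠ 0 := by linarith
  have hd0 : r - ε j ≠ 0 := ne_of_gt hrεj
  set A := ∑ l, ε l * y l with hA
  set E := ε j with hE2
  field_simp
  ring

lemma bdd_integrable {Ω : Type} [MeasurableSpace Ω] (P : Measure Ω) [IsProbabilityMeasure P]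
    {f : Ω → ℝ} (hf : Measurable f) (C : ℝ) (h : ∀ ω, |f ω| ≤ C) : Integrable f P :=
  (integrable_const C).mono' hf.aestronglyMeasurable (Filter.Eventually.of_forall
    (fun ω => by simpa using h ω))

lemma le_pow_div {M t : ℝ} (hM : 0 ≤ M) (ht : 0 < t) {k : ℕ} (hk : 1 ≤ k) :
    M ≤ M^(2*k)/t^(2*k - 1) + t := by
  rcases le_or_gt M t with h | h
  · have h0 : 0 ≤ M^(2*k)/t^(2*k-1) := by positivity
    linarith
  · have h1 : t^(2*k-1) ≤ M^(2*k-1) := pow_le_pow_left₀ ht.le h.le _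
    have h2k : 2*k = 1 + (2*k - 1) := by omega
    have hpow : M^(2*k) = M * M^(2*k-1) := by
      conv_lhs => rw [h2k]
      rw [pow_add, pow_one]
    have h3 : M * t^(2*k-1) ≤ M^(2*k) := by
      rw [hpow]; exact mul_le_mul_of_nonneg_left h1 hM
    have h4 : M ≤ M^(2*k)/t^(2*k-1) := (le_div_iff₀ (by positivity)).mpr h3
    linarith

lemma invariance_integral {n : ℕ} {Ω : Type} [MeasurableSpace Ω] {P : Measure Ω}
    {U : Ω → Fin n → Fin n → ℝ} (hU : Measurable U)
    (hinv : ∀ V : Matrix (Fin n) (Fin n) ℝ, V ∈ Matrix.orthogonalGroup (Fin n) ℝ →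
      Measure.map (fun ω i j => (V * Matrix.of (U ω)) i j) P = Measure.map U P)
    (V : Matrix (Fin n) (Fin n) ℝ) (hV : V ∈ Matrix.orthogonalGroup (Fin n) ℝ)
    (G : (Fin n → Fin n → ℝ) → ℝ) (hG : Measurable G) :
    ∫ ω, G (fun a b => (V * Matrix.of (U ω)) a b) ∂P = ∫ ω, G (U ω) ∂P := by
  have hT : Measurable (fun ω => (fun a b => (V * Matrix.of (U ω)) a b)) := by
    apply measurable_pi_lambda
    intro a
    apply measurable_pi_lambda
    intro b
    simp_rw [Matrix.mul_apply]
    apply Finset.measurable_sum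
    intro l _
    exact measurable_const.mul ((measurable_pi_apply b).comp ((measurable_pi_apply l).comp hU))
  rw [← MeasureTheory.integral_map hT.aemeasurable hG.aestronglyMeasurable,
      ← MeasureTheory.integral_map hU.aemeasurable hG.aestronglyMeasurable, hinv V hV]

lemma moment_bound {n : ℕ} (hn : 2 ≤ n) {Ω : Type} [MeasurableSpace Ω] (P : Measure Ω)
    [IsProbabilityMeasure P] {U : Ω → Fin n → Fin n → ℝ} (hU : Measurable U)
    (hUorth : ∀ ω, Matrix.of (U ω) ∈ Matrix.orthogonalGroup (Fin n) ℝ)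
    (hinv : ∀ V : Matrix (Fin n) (Fin n) ℝ, V ∈ Matrix.orthogonalGroup (Fin n) ℝ →
      Measure.map (fun ω i j => (V * Matrix.of (U ω)) i j) P = Measure.map U P)
    (v : Fin n → ℝ) (hv : ∑ l, (v l)^2 ≤ n) {k : ℕ} (hk : 1 ≤ k) (j : Fin n) :
    ∫ ω, ((Matrix.of (U ω)).mulVec v j)^(2*k) ∂P ≤ 2 * (2*(k:ℝ))^k * Real.exp k := by
  have hn0 : (0:ℝ) < n := by
    have : (0:ℕ) < n := by omega
    exact_mod_cast this
  set r := Real.sqrt n with hrdef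
  have hr2 : r^2 = n := Real.sq_sqrt hn0.le
  have hr0 : 0 < r := Real.sqrt_pos.mpr hn0
  set Y : Ω → Fin n → ℝ := fun ω => (Matrix.of (U ω)).mulVec v with hY
  have hYm : ∀ l, Measurable fun ω => Y ω l := by
    intro l
    simp only [hY, Matrix.mulVec, dotProduct, Matrix.of_apply]
    apply Finset.measurable_sum
    intro m _
    exact ((measurable_pi_apply m).comp ((measurable_pi_apply l).comp hU)).mul measurable_const
  have hYnorm : ∀ ω, ∑ l, (Y ω l)^2 ≤ n := fun ω => by
    rw [hY]; rw [orth_norm (hUorth ω) v]; exact hv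
  have hYabs : ∀ ω l, |Y ω l| ≤ r := by
    intro ω l
    rw [← Real.sqrt_sq_eq_abs]
    apply Real.sqrt_le_sqrt
    calc (Y ω l)^2 ≤ ∑ m, (Y ω m)^2 :=
          Finset.single_le_sum (fun m _ => sq_nonneg (Y ω m)) (Finset.mem_univ l)
      _ ≤ n := hYnorm ω
  set A : (Fin n → Bool) → Ω → ℝ := fun s ω => ∑ l, (if s l then (1:ℝ) else -1) * Y ω l with hA
  have hAm : ∀ s, Measurable (A s) := by
    intro s
    apply Finset.measurable_sum
    intro l _
    exact (hYm l).const_mul _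
  have hAabs : ∀ s ω, |A s ω / r| ≤ n := by
    intro s ω
    rw [abs_div, abs_of_pos hr0, div_le_iff₀ hr0]
    calc |A s ω| ≤ ∑ l, |(if s l then (1:ℝ) else -1) * Y ω l| := Finset.abs_sum_le_sum_abs _ _
      _ ≤ ∑ l, r := by
          apply Finset.sum_le_sum
          intro l _
          rw [abs_mul]
          have h1 : |(if s l then (1:ℝ) else -1)| = 1 := by
            by_cases h : s l <;> simp [h]
          rw [h1, one_mul]
          exact hYabs ω l
      _ = n * r := by rw [Finset.sum_const, Finset.card_univ, Fintype.card_fin, nsmul_eq_mul]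
  set G : (Fin n → Fin n → ℝ) → ℝ := fun W => ((Matrix.of W).mulVec v j)^(2*k) with hG
  have hGm : Measurable G := by
    simp only [hG, Matrix.mulVec, dotProduct, Matrix.of_apply]
    apply Measurable.pow_const
    apply Finset.measurable_sum
    intro m _
    exact ((measurable_pi_apply m).comp (measurable_pi_apply j : Measurable fun W : Fin n → Fin n → ℝ => W j)).mul measurable_const
  have hstep : ∀ s : Fin n → Bool,
      ∫ ω, (Y ω j)^(2*k) ∂P = ∫ ω, (A s ω / r)^(2*k) ∂P := by
    intro s
    set w : Fin n → ℝ := fun l => (if s l then (1:ℝ) else -1) - (if l = j then r else 0) with hw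
    have h := invariance_integral hU hinv (house w) (house_mem w) G hGm
    have hpt : ∀ ω, G (fun a b => (house w * Matrix.of (U ω)) a b) = (A s ω / r)^(2*k) := by
      intro ω
      have e1 : Matrix.of (fun a b => (house w * Matrix.of (U ω)) a b)
          = house w * Matrix.of (U ω) := rfl
      show ((Matrix.of (fun a b => (house w * Matrix.of (U ω)) a b)).mulVec v j)^(2*k) = _
      rw [e1, ← Matrix.mulVec_mulVec, house_eps hn s j]
    have e0 : ∫ ω, (Y ω j)^(2*k) ∂P = ∫ ω, G (U ω) ∂P := rfl
    rw [e0, ← h]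
    exact integral_congr_ae (Filter.Eventually.of_forall hpt)
  have hintS : ∀ s : Fin n → Bool, Integrable (fun ω => (A s ω / r)^(2*k)) P := by
    intro s
    apply bdd_integrable P (((hAm s).div_const r).pow_const _) ((n:ℝ)^(2*k))
    intro ω
    rw [abs_pow]
    exact pow_le_pow_left₀ (abs_nonneg _) (hAabs s ω) _
  have hsum : (2^n : ℝ) * ∫ ω, (Y ω j)^(2*k) ∂P
      = ∫ ω, ∑ s : Fin n → Bool, (A s ω / r)^(2*k) ∂P := by
    rw [MeasureTheory.integral_finset_sum _ (fun s _ => hintS s)]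
    rw [Finset.sum_congr rfl (fun s _ => (hstep s).symm), Finset.sum_const, Finset.card_univ]
    rw [Fintype.card_fun, Fintype.card_fin, Fintype.card_bool, nsmul_eq_mul]
    push_cast
    ring
  have hptw : ∀ ω, ∑ s : Fin n → Bool, (A s ω / r)^(2*k)
      ≤ (2^n : ℝ) * (2 * (2*(k:ℝ))^k * Real.exp k) := by
    intro ω
    have h1 : ∀ s : Fin n → Bool, (A s ω / r)^(2*k) = (A s ω)^(2*k) / (n:ℝ)^k := by
      intro s
      rw [div_pow]
      congr 1
      rw [pow_mul, hr2]
    rw [Finset.sum_congr rfl (fun s _ => h1 s), ← Finset.sum_div,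
      div_le_iff₀ (by positivity : (0:ℝ) < (n:ℝ)^k)]
    calc ∑ s : Fin n → Bool, (A s ω)^(2*k)
        ≤ 2^n * (2 * (2*(k:ℝ))^k * Real.exp k * (n:ℝ)^k) :=
          rad_moment (by omega) hk (Y ω) (hYnorm ω)
      _ = 2^n * (2 * (2*(k:ℝ))^k * Real.exp k) * (n:ℝ)^k := by ring
  have hint2 : ∫ ω, ∑ s : Fin n → Bool, (A s ω / r)^(2*k) ∂P
      ≤ (2^n : ℝ) * (2 * (2*(k:ℝ))^k * Real.exp k) := by
    calc ∫ ω, ∑ s : Fin n → Bool, (A s ω / r)^(2*k) ∂P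
        ≤ ∫ _ω, ((2^n : ℝ) * (2 * (2*(k:ℝ))^k * Real.exp k)) ∂P :=
          integral_mono (integrable_finset_sum _ (fun s _ => hintS s)) (integrable_const _) hptw
      _ = (2^n : ℝ) * (2 * (2*(k:ℝ))^k * Real.exp k) := by
          rw [integral_const]; simp
  have h2n : (0:ℝ) < 2^n := by positivity
  have := hsum.le.trans hint2
  calc ∫ ω, ((Matrix.of (U ω)).mulVec v j)^(2*k) ∂P = ∫ ω, (Y ω j)^(2*k) ∂P := rfl
    _ ≤ 2 * (2*(k:ℝ))^k * Real.exp k := by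
        nlinarith [this, h2n]

/-- **Estimate (2.24)–(2.25) in the proof of Corollary 2.3 (random rotations of points in
the ball of `L_2^n`).**  There is a universal constant `S ∈ (0,∞)` such that for every
`n ≥ 2`, every `x₁, …, xₙ ∈ ℝⁿ` with `‖x_i‖_{L_2^n} ≤ 1` (i.e. `(1/n) ∑ⱼ x_i(j)² ≤ 1`) and
every Haar-distributed random orthogonal matrix `U ∈ O(n)` (i.e. a random variable taking
values in the orthogonal group whose distribution is invariant under left translation by
every fixed orthogonal matrix — this characterizes the Haar probability measure on the
compact group `O(n)`), one has `E[max_i ‖U x_i‖_{L_∞^n}] ≤ S √(log n)`. -/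
theorem expected_max_supnorm_random_rotation :
    ∃ S : ℝ, 0 < S ∧
      ∀ (n : ℕ), 2 ≤ n →
      ∀ (x : Fin n → Fin n → ℝ), (∀ i, (1 / (n : ℝ)) * ∑ j, x i j ^ 2 ≤ 1) →
      ∀ (Ω : Type) (_ : MeasurableSpace Ω) (P : Measure Ω), IsProbabilityMeasure P →
      ∀ (U : Ω → Fin n → Fin n → ℝ),
        Measurable U →
        (∀ ω, Matrix.of (U ω) ∈ Matrix.orthogonalGroup (Fin n) ℝ) →
        (∀ V : Matrix (Fin n) (Fin n) ℝ, V ∈ Matrix.orthogonalGroup (Fin n) ℝ →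
          Measure.map (fun ω i j => (V * Matrix.of (U ω)) i j) P = Measure.map U P) →
        ∫ ω, (⨆ i, ⨆ j, |(Matrix.of (U ω)).mulVec (x i) j|) ∂P
          ≤ S * Real.sqrt (Real.log n) := by
  refine ⟨40, by norm_num, ?_⟩
  intro n hn x hx Ω mΩ P hP U hU hUorth hinv
  haveI : Nonempty (Fin n) := ⟨⟨0, by omega⟩⟩
  have hn0 : (0:ℝ) < n := by
    have : (0:ℕ) < n := by omega
    exact_mod_cast this
  have hn1 : (1:ℝ) < n := by
    have : (1:ℕ) < n := by omega
    exact_mod_cast this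
  have hxn : ∀ i, ∑ j, (x i j)^2 ≤ n := by
    intro i
    have h := hx i
    rw [one_div, inv_mul_le_iff₀ hn0, mul_one] at h
    exact h
  set r := Real.sqrt n with hrdef
  have hr2 : r^2 = n := Real.sq_sqrt hn0.le
  have hr0 : 0 < r := Real.sqrt_pos.mpr hn0
  set Y : Ω → Fin n → Fin n → ℝ := fun ω i => (Matrix.of (U ω)).mulVec (x i) with hYdef
  have hYm : ∀ i j, Measurable fun ω => Y ω i j := by
    intro i j
    simp only [hYdef, Matrix.mulVec, dotProduct, Matrix.of_apply]
    apply Finset.measurable_sum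
    intro m _
    exact ((measurable_pi_apply m).comp ((measurable_pi_apply j).comp hU)).mul measurable_const
  have hYabs : ∀ ω i j, |Y ω i j| ≤ r := by
    intro ω i j
    rw [← Real.sqrt_sq_eq_abs]
    apply Real.sqrt_le_sqrt
    calc (Y ω i j)^2 ≤ ∑ m, (Y ω i m)^2 :=
          Finset.single_le_sum (fun m _ => sq_nonneg (Y ω i m)) (Finset.mem_univ j)
      _ = ∑ m, (x i m)^2 := orth_norm (hUorth ω) (x i)
      _ ≤ n := hxn i
  set M : Ω → ℝ := fun ω => ⨆ i, ⨆ j, |Y ω i j| with hMdef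
  have hM0 : ∀ ω, 0 ≤ M ω := by
    intro ω
    obtain ⟨i⟩ := (inferInstance : Nonempty (Fin n))
    calc (0:ℝ) ≤ |Y ω i i| := abs_nonneg _
      _ ≤ ⨆ j, |Y ω i j| := le_ciSup (f := fun j => |Y ω i j|)
          (Set.Finite.bddAbove (Set.finite_range _)) i
      _ ≤ M ω := le_ciSup (f := fun i => ⨆ j, |Y ω i j|)
          (Set.Finite.bddAbove (Set.finite_range _)) i
  -- choose k
  set k := ⌈Real.log n⌉₊ with hkdef
  have hlogpos : 0 < Real.log n := Real.log_pos hn1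
  have hk1 : 1 ≤ k := Nat.one_le_ceil_iff.mpr hlogpos
  have hlogk : Real.log n ≤ k := Nat.le_ceil _
  have hkub : (k:ℝ) ≤ 2.45 * Real.log n := by
    have h1 : (k:ℝ) < Real.log n + 1 := Nat.ceil_lt_add_one hlogpos.le
    have h2 : Real.log 2 ≤ Real.log n := by
      apply Real.log_le_log (by norm_num)
      exact_mod_cast hn
    have h3 : (0.6931471803:ℝ) < Real.log 2 := Real.log_two_gt_d9
    nlinarith
  have he0 : (0:ℝ) < Real.exp 1 := Real.exp_pos 1
  have he : Real.exp 1 < 2.7182818286 := Real.exp_one_lt_d9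
  have hexpk : (n:ℝ) ≤ Real.exp k := by
    rw [← Real.exp_log hn0]
    exact Real.exp_le_exp.mpr hlogk
  set Bk := 2 * (2*(k:ℝ))^k * Real.exp k with hBk
  have hBk0 : 0 < Bk := by
    have : (0:ℝ) < (k:ℝ) := by exact_mod_cast hk1
    positivity
  set t := 2 * Real.exp 1 * Real.sqrt (2 * Real.exp 1 * k) with htdef
  have hz0 : (0:ℝ) < 2 * Real.exp 1 * k := by
    have : (0:ℝ) < (k:ℝ) := by exact_mod_cast hk1
    positivity
  have ht0 : 0 < t := mul_pos (by positivity) (Real.sqrt_pos.mpr hz0)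
  have ht2 : t^2 = 4*(Real.exp 1)^2 * (2 * Real.exp 1 * k) := by
    rw [htdef, mul_pow, Real.sq_sqrt hz0.le]
    ring
  -- moment bounds
  have hmom : ∀ i j, ∫ ω, (Y ω i j)^(2*k) ∂P ≤ Bk := fun i j =>
    moment_bound hn P hU hUorth hinv (x i) (hxn i) hk1 j
  -- integrability of the coordinate powers
  have hint1 : ∀ (i j : Fin n), Integrable (fun ω => (Y ω i j)^(2*k)) P := by
    intro i j
    apply bdd_integrable P ((hYm i j).pow_const _) (r^(2*k))
    intro ω
    rw [abs_pow]
    exact pow_le_pow_left₀ (abs_nonneg _) (hYabs ω i j) _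
  have hintsum : Integrable (fun ω => ∑ i, ∑ j, (Y ω i j)^(2*k)) P :=
    integrable_finset_sum _ (fun i _ => integrable_finset_sum _ (fun j _ => hint1 i j))
  -- pointwise: M^(2k) ≤ ∑∑
  have hMpow : ∀ ω, (M ω)^(2*k) ≤ ∑ i, ∑ j, (Y ω i j)^(2*k) := by
    intro ω
    obtain ⟨i0, hi0⟩ := exists_eq_ciSup_of_finite (f := fun i => ⨆ j, |Y ω i j|)
    obtain ⟨j0, hj0⟩ := exists_eq_ciSup_of_finite (f := fun j => |Y ω i0 j|)
    have hM : M ω = |Y ω i0 j0| := by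
      rw [show M ω = ⨆ i, ⨆ j, |Y ω i j| from rfl, ← hi0, ← hj0]
    rw [hM]
    rw [(even_two_mul k).pow_abs]
    calc (Y ω i0 j0)^(2*k) ≤ ∑ j, (Y ω i0 j)^(2*k) :=
          Finset.single_le_sum (f := fun j => (Y ω i0 j)^(2*k))
            (fun m _ => (even_two_mul k).pow_nonneg _) (Finset.mem_univ j0)
      _ ≤ ∑ i, ∑ j, (Y ω i j)^(2*k) :=
          Finset.single_le_sum (f := fun i => ∑ j, (Y ω i j)^(2*k)) (fun m _ => Finset.sum_nonneg
            (fun j _ => (even_two_mul k).pow_nonneg _)) (Finset.mem_univ i0)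
  -- integral bound
  have hmain : ∫ ω, M ω ∂P ≤ (∑ i, ∑ j, ∫ ω, (Y ω i j)^(2*k) ∂P)/t^(2*k-1) + t := by
    have hgint : Integrable (fun ω => (∑ i, ∑ j, (Y ω i j)^(2*k))/t^(2*k-1) + t) P :=
      (hintsum.div_const _).add (integrable_const _)
    calc ∫ ω, M ω ∂P ≤ ∫ ω, ((∑ i, ∑ j, (Y ω i j)^(2*k))/t^(2*k-1) + t) ∂P := by
          apply integral_mono_of_nonneg (Filter.Eventually.of_forall hM0) hgint
          apply Filter.Eventually.of_forall
          intro ω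
          calc M ω ≤ (M ω)^(2*k)/t^(2*k-1) + t := le_pow_div (hM0 ω) ht0 hk1
            _ ≤ (∑ i, ∑ j, (Y ω i j)^(2*k))/t^(2*k-1) + t := by
                have := hMpow ω
                have htp : (0:ℝ) < t^(2*k-1) := by positivity
                gcongr
      _ = (∫ ω, (∑ i, ∑ j, (Y ω i j)^(2*k)) ∂P)/t^(2*k-1) + t := by
          rw [integral_add (hintsum.div_const _) (integrable_const _), integral_div,
            integral_const]
          simp
      _ = (∑ i, ∑ j, ∫ ω, (Y ω i j)^(2*k) ∂P)/t^(2*k-1) + t := by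
          rw [integral_finset_sum _ (fun i _ => integrable_finset_sum _ (fun j _ => hint1 i j))]
          congr 2
          refine Finset.sum_congr rfl (fun i _ => ?_)
          rw [integral_finset_sum _ (fun j _ => hint1 i j)]
  -- numeric: ∑∑ ∫ ≤ n² Bk ≤ t^(2k)
  have hsumb : (∑ i, ∑ j, ∫ ω, (Y ω i j)^(2*k) ∂P) ≤ (n:ℝ)^2 * Bk := by
    calc (∑ i, ∑ j, ∫ ω, (Y ω i j)^(2*k) ∂P) ≤ ∑ _i : Fin n, ∑ _j : Fin n, Bk :=
          Finset.sum_le_sum (fun i _ => Finset.sum_le_sum (fun j _ => hmom i j))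
      _ = (n:ℝ)^2 * Bk := by
          simp [Finset.sum_const, Finset.card_univ, Fintype.card_fin, nsmul_eq_mul]
          ring
  have htk : t^(2*k) = (4*(Real.exp 1)^2)^k * ((2*(k:ℝ))^k * Real.exp k) := by
    rw [pow_mul, ht2, mul_pow]
    congr 1
    rw [show 2*Real.exp 1*(k:ℝ) = 2*(k:ℝ)*Real.exp 1 by ring, mul_pow, Real.exp_one_pow]
  have h4e : (2:ℝ) * (n:ℝ)^2 ≤ (4*(Real.exp 1)^2)^k := by
    have h41 : (4:ℝ) ≤ 4^k := by
      calc (4:ℝ) = 4^1 := (pow_one 4).symm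
        _ ≤ 4^k := pow_le_pow_right₀ (by norm_num) hk1
    have hek : (0:ℝ) < Real.exp k := Real.exp_pos _
    calc (2:ℝ)*(n:ℝ)^2 ≤ 4 * (Real.exp k)^2 := by nlinarith
      _ ≤ 4^k * (Real.exp k)^2 := by nlinarith
      _ = (4*(Real.exp 1)^2)^k := by
          rw [mul_pow, ← Real.exp_one_pow k]
          ring
  have hnBk : (n:ℝ)^2 * Bk ≤ t^(2*k) := by
    rw [htk, hBk]
    have hpos : (0:ℝ) ≤ (2*(k:ℝ))^k * Real.exp k := by positivity
    calc (n:ℝ)^2 * (2 * (2*(k:ℝ))^k * Real.exp k)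
        = (2*(n:ℝ)^2) * ((2*(k:ℝ))^k * Real.exp k) := by ring
      _ ≤ (4*(Real.exp 1)^2)^k * ((2*(k:ℝ))^k * Real.exp k) :=
          mul_le_mul_of_nonneg_right h4e hpos
  have htt : t^(2*k)/t^(2*k-1) = t := by
    have h2k : 2*k = (2*k-1)+1 := by omega
    conv_lhs => rw [h2k]
    rw [pow_succ]
    field_simp
    rw [Nat.add_sub_cancel]
  have hfinal : ∫ ω, M ω ∂P ≤ 2*t := by
    have htp : (0:ℝ) < t^(2*k-1) := by positivity
    calc ∫ ω, M ω ∂P ≤ (∑ i, ∑ j, ∫ ω, (Y ω i j)^(2*k) ∂P)/t^(2*k-1) + t := hmain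
      _ ≤ t^(2*k)/t^(2*k-1) + t := by
          gcongr
          exact hsumb.trans hnBk
      _ = 2*t := by rw [htt]; ring
  -- numeric: 2t ≤ 40 √(log n)
  have h2t : 2*t ≤ 40 * Real.sqrt (Real.log n) := by
    have h2tsq : (2*t)^2 = 32 * (Real.exp 1)^3 * k := by
      rw [mul_pow, ht2]; ring
    have he3 : (Real.exp 1)^3 ≤ 20.0856 := by
      calc (Real.exp 1)^3 ≤ (2.7182818286:ℝ)^3 := pow_le_pow_left₀ he0.le he.le 3
        _ ≤ 20.0856 := by norm_num
    have hsq : (2*t)^2 ≤ 1600 * Real.log n := by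
      have hk0 : (0:ℝ) ≤ (k:ℝ) := Nat.cast_nonneg k
      rw [h2tsq]
      have hs1 : 32 * (Real.exp 1)^3 * (k:ℝ) ≤ 32 * 20.0856 * (k:ℝ) := by
        have := mul_le_mul_of_nonneg_right he3 hk0
        linarith only [this]
      have hs2 : 32 * 20.0856 * (k:ℝ) ≤ 32 * 20.0856 * (2.45 * Real.log n) := by
        exact mul_le_mul_of_nonneg_left hkub (by norm_num)
      have hs3 : 32 * 20.0856 * (2.45 * Real.log n) ≤ 1600 * Real.log n := by
        linarith only [hlogpos]
      linarith only [hs1, hs2, hs3]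
    calc 2*t = Real.sqrt ((2*t)^2) := (Real.sqrt_sq (by positivity)).symm
      _ ≤ Real.sqrt (1600 * Real.log n) := Real.sqrt_le_sqrt hsq
      _ = 40 * Real.sqrt (Real.log n) := by
          rw [Real.sqrt_mul (by norm_num), show (1600:ℝ) = 40^2 by norm_num, Real.sqrt_sq
            (by norm_num)]
  calc ∫ ω, (⨆ i, ⨆ j, |(Matrix.of (U ω)).mulVec (x i) j|) ∂P = ∫ ω, M ω ∂P := rfl
    _ ≤ 2*t := hfinal
    _ ≤ 40 * Real.sqrt (Real.log n) := h2t
end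

section
/- Let (E,‖·‖_E) be a Banach space, p ∈ (1,2], T ∈ (0,∞), and suppose E has Rademacher type p with constant T, i.e., for every m ∈ ℕ and every v_1,…,v_m ∈ E one has 2^{−m}·Σ_{ε∈{−1,1}^m} ‖Σ_{i=1}^m ε_i v_i‖_E^p ≤ T^p·Σ_{i=1}^m ‖v_i‖_E^p. Let R ∈ (0,∞), let 𝒯 ⊆ E with ‖t‖_E ≤ R for all t ∈ 𝒯, and let z be a finite convex combination of elements of 𝒯. Then for every d ∈ ℕ there exist x_1,…,x_d ∈ 𝒯 such that ‖(1/d)·Σ_{s=1}^d x_s − z‖_E ≤ 4·R·T / d^{1−1/p}. -/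
open MeasureTheory
open Finset

-- Jensen: mean ≤ (mean of p-th powers)^{1/p}
lemma maurey_mean {ι : Type*} [Fintype ι] [Nonempty ι] (p : ℝ) (hp : 1 ≤ p)
    (a : ι → ℝ) (ha : ∀ ε, 0 ≤ a ε) (C : ℝ) (hC : 0 ≤ C)
    (h : (∑ ε, a ε ^ p) / (Fintype.card ι : ℝ) ≤ C ^ p) :
    (∑ ε, a ε) / (Fintype.card ι : ℝ) ≤ C := by
  have hcard : (0:ℝ) < (Fintype.card ι : ℝ) := by
    exact_mod_cast Fintype.card_pos
  set w : ι → ℝ := fun _ => (Fintype.card ι : ℝ)⁻¹ with hw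
  have hwsum : ∑ _i : ι, (Fintype.card ι : ℝ)⁻¹ = 1 := by
    rw [Finset.sum_const, Finset.card_univ, nsmul_eq_mul, mul_inv_cancel₀ hcard.ne']
  have key := Real.rpow_arith_mean_le_arith_mean_rpow Finset.univ
    (fun _ => (Fintype.card ι : ℝ)⁻¹) a (fun i _ => by positivity) hwsum
    (fun i _ => ha i) hp
  have h1 : ∑ i : ι, (Fintype.card ι : ℝ)⁻¹ * a i = (∑ ε, a ε) / (Fintype.card ι : ℝ) := by
    rw [← Finset.mul_sum]; ring
  have h2 : ∑ i : ι, (Fintype.card ι : ℝ)⁻¹ * a i ^ p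
      = (∑ ε, a ε ^ p) / (Fintype.card ι : ℝ) := by
    rw [← Finset.mul_sum]; ring
  rw [h1, h2] at key
  by_contra hcon
  push_neg at hcon
  have hmean : 0 ≤ (∑ ε, a ε) / (Fintype.card ι : ℝ) := by
    apply div_nonneg _ hcard.le
    exact Finset.sum_nonneg fun i _ => ha i
  exact absurd (le_trans key h) (not_le.mpr (Real.rpow_lt_rpow hC hcon (lt_of_lt_of_le one_pos hp)))

lemma maurey_marginal {m d : ℕ} (lam : Fin m → ℝ) (hsum : ∑ k, lam k = 1)
    {E : Type*} [AddCommMonoid E] [Module ℝ E] (s : Fin d) (v : Fin m → E) :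
    ∑ σ : Fin d → Fin m, (∏ u, lam (σ u)) • v (σ s) = ∑ k, lam k • v k := by
  classical
  rw [← Equiv.sum_comp (Equiv.funSplitAt s (Fin m)).symm
    (fun σ : Fin d → Fin m => (∏ u, lam (σ u)) • v (σ s)), Fintype.sum_prod_type]
  refine Finset.sum_congr rfl fun k _ => ?_
  have hs : ∀ g : {j // j ≠ s} → Fin m,
      (Equiv.funSplitAt s (Fin m)).symm (k, g) s = k := by
    intro g; simp [Equiv.funSplitAt, Equiv.piSplitAt]
  have hprod : ∀ g : {j // j ≠ s} → Fin m,
      (∏ u, lam ((Equiv.funSplitAt s (Fin m)).symm (k, g) u))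
        = lam k * ∏ j : {j // j ≠ s}, lam (g j) := by
    intro g
    rw [Finset.prod_eq_mul_prod_sdiff_singleton_of_mem (Finset.mem_univ s), hs g]
    congr 1
    rw [Finset.prod_subtype (univ \ {s}) (p := fun j => j ≠ s) (by simp)
      (fun u => lam ((Equiv.funSplitAt s (Fin m)).symm (k, g) u))]
    refine Finset.prod_congr rfl fun j _ => ?_
    congr 1
    simp [Equiv.funSplitAt, Equiv.piSplitAt, j.2]
  simp_rw [hs, hprod]
  have h1 : ∑ g : {j // j ≠ s} → Fin m, ∏ j : {j // j ≠ s}, lam (g j) = 1 := by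
    rw [← Fintype.prod_sum (κ := fun _ : {j // j ≠ s} => Fin m) (fun _ j => lam j)]
    simp [hsum]
  rw [← Finset.sum_smul, ← Finset.mul_sum, h1, mul_one]

-- symmetrization: for each fixed sign vector the ww-weighted sum is unchanged
lemma maurey_symm {m d : ℕ} (lam : Fin m → ℝ)
    {E : Type*} [NormedAddCommGroup E] [NormedSpace ℝ E] (t : Fin m → E)
    (ε : Fin d → Bool) :
    ∑ q : (Fin d → Fin m) × (Fin d → Fin m),
      ((∏ u, lam (q.1 u)) * ∏ u, lam (q.2 u)) * ‖∑ s, (t (q.1 s) - t (q.2 s))‖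
    = ∑ q : (Fin d → Fin m) × (Fin d → Fin m),
      ((∏ u, lam (q.1 u)) * ∏ u, lam (q.2 u)) *
        ‖∑ s, (if ε s then (1:ℝ) else -1) • (t (q.1 s) - t (q.2 s))‖ := by
  classical
  set Φ : ((Fin d → Fin m) × (Fin d → Fin m)) → ((Fin d → Fin m) × (Fin d → Fin m)) :=
    fun q => (fun s => if ε s then q.1 s else q.2 s, fun s => if ε s then q.2 s else q.1 s)
      with hΦ
  have hinv : Function.Involutive Φ := by
    intro q
    simp only [hΦ]
    ext s <;> by_cases h : ε s <;> simp [h]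
  refine Fintype.sum_equiv hinv.toPerm _ _ fun q => ?_
  simp only [Function.Involutive.coe_toPerm]
  have hweight : ((∏ u, lam ((Φ q).1 u)) * ∏ u, lam ((Φ q).2 u))
      = ((∏ u, lam (q.1 u)) * ∏ u, lam (q.2 u)) := by
    rw [← Finset.prod_mul_distrib, ← Finset.prod_mul_distrib]
    refine Finset.prod_congr rfl fun u _ => ?_
    by_cases h : ε u <;> simp [hΦ, h, mul_comm]
  have hvec : ∑ s, (if ε s then (1:ℝ) else -1) • (t ((Φ q).1 s) - t ((Φ q).2 s))
      = ∑ s, (t (q.1 s) - t (q.2 s)) := by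
    refine Finset.sum_congr rfl fun s _ => ?_
    by_cases h : ε s <;> simp [hΦ, h, neg_sub]
  rw [hweight, hvec]


/-- **Maurey's empirical method (Section 2.1).**  Let `(E,‖·‖)` be a Banach space of
Rademacher type `p ∈ (1,2]` with constant `T`, let `𝒯 ⊆ E` with `‖t‖ ≤ R` for all
`t ∈ 𝒯`, and let `z` be a finite convex combination of elements of `𝒯`.  Then for every
`d ∈ ℕ` there exist `x₁, …, x_d ∈ 𝒯` such that
`‖(1/d) ∑ₛ xₛ - z‖ ≤ 4 R T / d^{1 - 1/p}`. -/
theorem maurey_empirical_method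
    {E : Type*} [NormedAddCommGroup E] [NormedSpace ℝ E] [CompleteSpace E]
    (p T : ℝ) (hp : 1 < p) (hp2 : p ≤ 2) (hT : 0 < T)
    (htype : ∀ (m : ℕ) (v : Fin m → E),
      (∑ ε : Fin m → Bool, ‖∑ i, (if ε i then (1 : ℝ) else -1) • v i‖ ^ p) / 2 ^ m
        ≤ T ^ p * ∑ i, ‖v i‖ ^ p)
    (R : ℝ) (hR : 0 < R) (𝒯 : Set E) (h𝒯 : ∀ t ∈ 𝒯, ‖t‖ ≤ R)
    (z : E) (m : ℕ) (lam : Fin m → ℝ) (t : Fin m → E)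
    (hlam : ∀ k, 0 < lam k) (hsum : ∑ k, lam k = 1) (ht : ∀ k, t k ∈ 𝒯)
    (hz : z = ∑ k, lam k • t k)
    (d : ℕ) (hd : 0 < d) :
    ∃ x : Fin d → E, (∀ s, x s ∈ 𝒯) ∧
      ‖(d : ℝ)⁻¹ • (∑ s, x s) - z‖ ≤ 4 * R * T / (d : ℝ) ^ (1 - 1 / p) := by
  classical
  have hp0 : (0:ℝ) < p := lt_trans one_pos hp
  have hdpos : (0:ℝ) < (d:ℝ) := by exact_mod_cast hd
  have hm : 0 < m := by
    rcases Nat.eq_zero_or_pos m with h | h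
    · subst h; simp at hsum
    · exact h
  haveI : Nonempty (Fin m) := Fin.pos_iff_nonempty.mp hm
  set w : (Fin d → Fin m) → ℝ := fun σ => ∏ u, lam (σ u) with hwdef
  have hwpos : ∀ σ, 0 < w σ := fun σ => Finset.prod_pos fun u _ => hlam _
  have hwsum : ∑ σ : Fin d → Fin m, w σ = 1 := by
    rw [hwdef, ← Fintype.sum_pow lam d, hsum, one_pow]
  set C : ℝ := T * R * (d:ℝ) ^ (1/p) with hCdef
  have hC0 : 0 ≤ C := by positivity
  have hcard : ((Fintype.card (Fin d → Bool) : ℕ) : ℝ) = 2 ^ d := by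
    simp [Fintype.card_fun]
  -- Rademacher bound per σ
  have hrad : ∀ σ : Fin d → Fin m,
      (∑ ε : Fin d → Bool, ‖∑ s, (if ε s then (1:ℝ) else -1) • t (σ s)‖) / 2 ^ d ≤ C := by
    intro σ
    have h2 : T ^ p * ∑ s : Fin d, ‖t (σ s)‖ ^ p ≤ C ^ p := by
      have hb : ∑ s : Fin d, ‖t (σ s)‖ ^ p ≤ (d:ℝ) * R ^ p := by
        calc ∑ s : Fin d, ‖t (σ s)‖ ^ p ≤ ∑ _s : Fin d, R ^ p :=
              Finset.sum_le_sum fun s _ =>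
                Real.rpow_le_rpow (norm_nonneg _) (h𝒯 _ (ht _)) hp0.le
          _ = (d:ℝ) * R ^ p := by simp [mul_comm]
      have hCp : C ^ p = T ^ p * ((d:ℝ) * R ^ p) := by
        rw [hCdef, Real.mul_rpow (by positivity) (by positivity),
          Real.mul_rpow hT.le hR.le, ← Real.rpow_mul (Nat.cast_nonneg d),
          one_div_mul_cancel hp0.ne', Real.rpow_one]
        ring
      rw [hCp]
      exact mul_le_mul_of_nonneg_left hb (Real.rpow_nonneg hT.le p)
    have := maurey_mean p hp.le
      (fun ε : Fin d → Bool => ‖∑ s, (if ε s then (1:ℝ) else -1) • t (σ s)‖)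
      (fun _ => norm_nonneg _) C hC0 ?_
    · rwa [hcard] at this
    · rw [hcard]
      exact le_trans (htype d fun s => t (σ s)) h2
  -- Step A
  set F : (Fin d → Fin m) → ℝ := fun σ => ‖∑ s : Fin d, (t (σ s) - z)‖ with hFdef
  have hstepA : ∀ σ, F σ ≤ ∑ σ' : Fin d → Fin m, w σ' * ‖∑ s, (t (σ s) - t (σ' s))‖ := by
    intro σ
    have hz' : ∀ s : Fin d, ∑ σ' : Fin d → Fin m, w σ' • t (σ' s) = z := by
      intro s; rw [hz, hwdef]; exact maurey_marginal lam hsum s t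
    have hrep : ∑ s : Fin d, (t (σ s) - z)
        = ∑ σ' : Fin d → Fin m, w σ' • (∑ s : Fin d, (t (σ s) - t (σ' s))) := by
      simp_rw [Finset.smul_sum, smul_sub]
      rw [Finset.sum_comm]
      refine Finset.sum_congr rfl fun s _ => ?_
      rw [Finset.sum_sub_distrib, ← Finset.sum_smul, hwsum, one_smul, hz' s]
    show ‖∑ s : Fin d, (t (σ s) - z)‖ ≤ _
    rw [hrep]
    refine le_trans (norm_sum_le _ _) (le_of_eq ?_)
    refine Finset.sum_congr rfl fun σ' _ => ?_
    rw [norm_smul, Real.norm_eq_abs, abs_of_pos (hwpos σ')]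
  -- Step B
  set S : ℝ := ∑ q : (Fin d → Fin m) × (Fin d → Fin m),
      (w q.1 * w q.2) * ‖∑ s : Fin d, (t (q.1 s) - t (q.2 s))‖ with hSdef
  have hstepB : ∑ σ : Fin d → Fin m, w σ * F σ ≤ S := by
    rw [hSdef, Fintype.sum_prod_type]
    refine Finset.sum_le_sum fun σ _ => ?_
    calc w σ * F σ ≤ w σ * ∑ σ' : Fin d → Fin m, w σ' * ‖∑ s, (t (σ s) - t (σ' s))‖ :=
          mul_le_mul_of_nonneg_left (hstepA σ) (hwpos σ).le
      _ = ∑ σ' : Fin d → Fin m, (w σ * w σ') * ‖∑ s, (t (σ s) - t (σ' s))‖ := by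
          rw [Finset.mul_sum]; exact Finset.sum_congr rfl fun σ' _ => (mul_assoc _ _ _).symm
  -- symmetrization average
  have hSavg : S = ∑ q : (Fin d → Fin m) × (Fin d → Fin m), (w q.1 * w q.2) *
      ((∑ ε : Fin d → Bool,
        ‖∑ s, (if ε s then (1:ℝ) else -1) • (t (q.1 s) - t (q.2 s))‖) / 2 ^ d) := by
    have h1 : ∀ ε : Fin d → Bool, S = ∑ q : (Fin d → Fin m) × (Fin d → Fin m),
        (w q.1 * w q.2) * ‖∑ s, (if ε s then (1:ℝ) else -1) • (t (q.1 s) - t (q.2 s))‖ := by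
      intro ε
      rw [hSdef, hwdef]
      exact maurey_symm lam t ε
    have h2 : (2:ℝ) ^ d * S = ∑ ε : Fin d → Bool, ∑ q : (Fin d → Fin m) × (Fin d → Fin m),
        (w q.1 * w q.2) * ‖∑ s, (if ε s then (1:ℝ) else -1) • (t (q.1 s) - t (q.2 s))‖ := by
      rw [Finset.sum_congr rfl fun ε _ => (h1 ε).symm, Finset.sum_const, Finset.card_univ,
        nsmul_eq_mul, hcard]
    have h3 : S = (∑ ε : Fin d → Bool, ∑ q : (Fin d → Fin m) × (Fin d → Fin m),
        (w q.1 * w q.2) * ‖∑ s, (if ε s then (1:ℝ) else -1) • (t (q.1 s) - t (q.2 s))‖) / 2 ^ d := by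
      rw [eq_div_iff (by positivity : (0:ℝ) < 2 ^ d).ne', ← h2]
      ring
    rw [h3, Finset.sum_comm, Finset.sum_div]
    refine Finset.sum_congr rfl fun q _ => ?_
    rw [← Finset.mul_sum, mul_div_assoc]
  -- per q bound
  have hq : ∀ q : (Fin d → Fin m) × (Fin d → Fin m),
      (∑ ε : Fin d → Bool,
        ‖∑ s, (if ε s then (1:ℝ) else -1) • (t (q.1 s) - t (q.2 s))‖) / 2 ^ d ≤ C + C := by
    intro q
    have hsplit : ∀ ε : Fin d → Bool,
        ‖∑ s, (if ε s then (1:ℝ) else -1) • (t (q.1 s) - t (q.2 s))‖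
        ≤ ‖∑ s, (if ε s then (1:ℝ) else -1) • t (q.1 s)‖
          + ‖∑ s, (if ε s then (1:ℝ) else -1) • t (q.2 s)‖ := by
      intro ε
      have : ∑ s, (if ε s then (1:ℝ) else -1) • (t (q.1 s) - t (q.2 s))
          = (∑ s, (if ε s then (1:ℝ) else -1) • t (q.1 s))
            - ∑ s, (if ε s then (1:ℝ) else -1) • t (q.2 s) := by
        simp_rw [smul_sub]
        rw [Finset.sum_sub_distrib]
      rw [this]
      exact norm_sub_le _ _
    calc (∑ ε : Fin d → Bool,
          ‖∑ s, (if ε s then (1:ℝ) else -1) • (t (q.1 s) - t (q.2 s))‖) / 2 ^ d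
        ≤ (∑ ε : Fin d → Bool, (‖∑ s, (if ε s then (1:ℝ) else -1) • t (q.1 s)‖
            + ‖∑ s, (if ε s then (1:ℝ) else -1) • t (q.2 s)‖)) / 2 ^ d := by
          gcongr with ε _
          exact hsplit ε
      _ = (∑ ε : Fin d → Bool, ‖∑ s, (if ε s then (1:ℝ) else -1) • t (q.1 s)‖) / 2 ^ d
          + (∑ ε : Fin d → Bool, ‖∑ s, (if ε s then (1:ℝ) else -1) • t (q.2 s)‖) / 2 ^ d := by
          rw [Finset.sum_add_distrib, add_div]
      _ ≤ C + C := add_le_add (hrad q.1) (hrad q.2)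
  have hwwsum : ∑ q : (Fin d → Fin m) × (Fin d → Fin m), w q.1 * w q.2 = 1 := by
    rw [Fintype.sum_prod_type]
    simp_rw [← Finset.mul_sum, hwsum, mul_one]
    exact hwsum
  have hfinal : ∑ σ : Fin d → Fin m, w σ * F σ ≤ 2 * C := by
    calc ∑ σ : Fin d → Fin m, w σ * F σ ≤ S := hstepB
      _ ≤ ∑ q : (Fin d → Fin m) × (Fin d → Fin m), (w q.1 * w q.2) * (C + C) := by
          rw [hSavg]
          refine Finset.sum_le_sum fun q _ => ?_
          exact mul_le_mul_of_nonneg_left (hq q) (mul_pos (hwpos q.1) (hwpos q.2)).le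
      _ = 2 * C := by rw [← Finset.sum_mul, hwwsum, one_mul]; ring
  -- extract a good σ
  obtain ⟨σ, -, hσ⟩ := Finset.exists_le_of_sum_le (Finset.univ_nonempty)
    (f := fun σ : Fin d → Fin m => w σ * F σ) (g := fun σ => w σ * (2 * C))
    (by rw [← Finset.sum_mul, hwsum, one_mul]; exact hfinal)
  have hF : F σ ≤ 2 * C := (mul_le_mul_iff_right₀ (hwpos σ)).mp hσ
  refine ⟨fun s => t (σ s), fun s => ht _, ?_⟩
  have h0 : (d:ℝ)⁻¹ • (∑ s : Fin d, t (σ s)) - z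
      = (d:ℝ)⁻¹ • (∑ s : Fin d, (t (σ s) - z)) := by
    rw [Finset.sum_sub_distrib, smul_sub]
    congr 1
    rw [Finset.sum_const, Finset.card_univ, Fintype.card_fin,
      ← Nat.cast_smul_eq_nsmul ℝ, smul_smul, inv_mul_cancel₀ hdpos.ne', one_smul]
  rw [h0, norm_smul, Real.norm_eq_abs, abs_of_pos (inv_pos.mpr hdpos)]
  have hrw : (d:ℝ)⁻¹ * (d:ℝ) ^ (1/p) = ((d:ℝ) ^ (1 - 1/p))⁻¹ := by
    rw [← Real.rpow_neg_one (d:ℝ), ← Real.rpow_add hdpos, ← Real.rpow_neg hdpos.le]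
    congr 1
    ring
  calc (d:ℝ)⁻¹ * F σ ≤ (d:ℝ)⁻¹ * (2 * C) :=
        mul_le_mul_of_nonneg_left hF (by positivity)
    _ = 2 * T * R * ((d:ℝ)⁻¹ * (d:ℝ) ^ (1/p)) := by rw [hCdef]; ring
    _ = 2 * T * R * ((d:ℝ) ^ (1 - 1/p))⁻¹ := by rw [hrw]
    _ ≤ 4 * R * T / (d:ℝ) ^ (1 - 1/p) := by
        rw [div_eq_mul_inv]
        have h1 : (0:ℝ) ≤ ((d:ℝ) ^ (1 - 1/p))⁻¹ :=
          inv_nonneg.mpr (Real.rpow_nonneg hdpos.le _)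
        have h2 : 2 * T * R ≤ 4 * R * T := by nlinarith
        exact mul_le_mul_of_nonneg_right h2 h1
end
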